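/- arXiv:math/0407228 — 6 statements merged into one kernel-verified Lean document; each statement's English description precedes it below -/
import Mathlib

section
/- Let a, b, α, R be positive real numbers and let T = (R/a)·exp(b/(2R)^α). If x : ℝ → ℝ satisfies the ODE x'(t) = a·exp(-b/x(t)^α) with x(0) = R, then for all t with |t| < T we have 0 < x(t) < 2R. -/
/-- "Control the flow" lemma: a positive solution of
`x' = a·exp(-b/x^α)`, `x 0 = R` satisfies `0 < x t < 2R` for `|t| < T`,
with `T = (R/a)·exp(b/(2R)^α)`. -/
theorem stmt0 (a b α R : ℝ) (ha : 0 < a) (hb : 0 < b) (hα : 0 < α) (hR : 0 < R)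
    (x : ℝ → ℝ) (hpos : ∀ t, 0 < x t)
    (hode : ∀ t, HasDerivAt x (a * Real.exp (-b / (x t) ^ α)) t)
    (hinit : x 0 = R) :
    ∀ t : ℝ, |t| < (R / a) * Real.exp (b / (2 * R) ^ α) →
      0 < x t ∧ x t < 2 * R := by
  intro t ht
  set c := b / (2 * R) ^ α with hc
  set M := a * Real.exp (-c) with hMdef
  set T := (R / a) * Real.exp c with hTdef
  have h2R : (0 : ℝ) < 2 * R := by linarith
  have hMpos : 0 < M := mul_pos ha (Real.exp_pos _)
  have hMT : M * T = R := by
    rw [hMdef, hTdef, Real.exp_neg]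
    field_simp
  have hmono : StrictMono x :=
    strictMono_of_hasDerivAt_pos hode fun u => mul_pos ha (Real.exp_pos _)
  refine ⟨hpos t, ?_⟩
  have hbound : ∀ u, x u ≤ 2 * R → a * Real.exp (-b / (x u) ^ α) ≤ M := by
    intro u hu
    have hxu := hpos u
    have hpow : (x u) ^ α ≤ (2 * R) ^ α := Real.rpow_le_rpow hxu.le hu hα.le
    have hppos : 0 < (x u) ^ α := Real.rpow_pos_of_pos hxu α
    have h1 : b / (2 * R) ^ α ≤ b / (x u) ^ α :=
      div_le_div_of_nonneg_left hb.le hppos hpow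
    have h2 : -b / (x u) ^ α ≤ -c := by rw [neg_div, hc]; linarith
    exact mul_le_mul_of_nonneg_left (Real.exp_le_exp.2 h2) ha.le
  rcases le_or_gt t 0 with h0 | h0
  · rcases eq_or_lt_of_le h0 with h | h
    · rw [h, hinit]; linarith
    · have := hmono h
      rw [hinit] at this
      linarith
  · by_contra hcon
    push_neg at hcon
    have htT : t < T := by rwa [abs_of_pos h0] at ht
    set S : Set ℝ := {u | u ∈ Set.Icc (0 : ℝ) t ∧ 2 * R ≤ x u} with hSdef
    have hxc : Continuous x := by
      refine continuous_iff_continuousAt.2 fun u => (hode u).continuousAt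
    have hScl : IsClosed S := by
      have : S = Set.Icc (0 : ℝ) t ∩ x ⁻¹' Set.Ici (2 * R) := by
        ext u; simp [hSdef, Set.mem_preimage, and_comm]
      rw [this]
      exact isClosed_Icc.inter (isClosed_Ici.preimage hxc)
    have htS : t ∈ S := ⟨⟨h0.le, le_refl t⟩, hcon⟩
    have hSne : S.Nonempty := ⟨t, htS⟩
    have hSbdd : BddBelow S := ⟨0, fun u hu => hu.1.1⟩
    set s := sInf S with hsdef
    have hsS : s ∈ S := hScl.csInf_mem hSne hSbdd
    have hs0 : 0 ≤ s := hsS.1.1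
    have hst : s ≤ t := hsS.1.2
    have hlt : ∀ u ∈ Set.Ico (0 : ℝ) s, x u < 2 * R := by
      intro u hu
      by_contra hge
      push_neg at hge
      have huS : u ∈ S := ⟨⟨hu.1, hu.2.le.trans hst⟩, hge⟩
      exact absurd (csInf_le hSbdd huS) (not_le.2 hu.2)
    have hmvt := norm_image_sub_le_of_norm_deriv_le_segment'
      (f := x) (f' := fun u => a * Real.exp (-b / (x u) ^ α)) (a := (0 : ℝ)) (b := s)
      (fun u _ => (hode u).hasDerivWithinAt)
      (fun u hu => by
        rw [Real.norm_eq_abs, abs_of_pos (mul_pos ha (Real.exp_pos _))]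
        exact hbound u (hlt u hu).le)
      s ⟨hs0, le_refl s⟩
    rw [hinit, Real.norm_eq_abs, sub_zero] at hmvt
    have h1 : x s - R ≤ M * s := le_trans (le_abs_self _) hmvt
    have h2 : M * s < M * T := by
      rcases eq_or_lt_of_le hs0 with h | h
      · rw [← h] at hsS
        have := hsS.2
        rw [hinit] at this
        linarith
      · exact mul_lt_mul_of_pos_left (lt_of_le_of_lt hst htT) hMpos
    have := hsS.2
    nlinarith [hMT]
end

section
/- Let ω ∈ (0,1) be irrational, with Gauss map iterates ω_j, products β_k = ∏_{j=0}^k ω_j (β_{-1}=1), and convergent denominators q_k. Then for every integer k > 0, |∑_{l=0}^k (β_{l-1}·log ω_l + (log q_{l+1})/q_l)| ≤ 18. -/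
/-- The Gauss map `x ↦ {1/x}`. -/
noncomputable def gaussMap (x : ℝ) : ℝ := Int.fract x⁻¹

/-- Gauss map iterates: `ω_n = G^n(ω)`. -/
noncomputable def gIter (ω : ℝ) (n : ℕ) : ℝ := gaussMap^[n] ω

/-- `betaPred ω k = β_{k-1} = ∏_{j=0}^{k-1} ω_j`, with `betaPred ω 0 = β_{-1} = 1`. -/
noncomputable def betaPred (ω : ℝ) (k : ℕ) : ℝ := ∏ j ∈ Finset.range k, gIter ω j

/-- Denominators of the continued fraction convergents of `ω ∈ (0,1)`:
`q_0 = 1`, `q_1 = a_1 = ⌊1/ω⌋`, `q_{k+2} = a_{k+2} q_{k+1} + q_k` with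
`a_{k+1} = ⌊1/ω_k⌋`. -/
noncomputable def cfDen (ω : ℝ) : ℕ → ℝ
  | 0 => 1
  | 1 => (⌊ω⁻¹⌋ : ℝ)
  | (k+2) => (⌊(gIter ω (k+1))⁻¹⌋ : ℝ) * cfDen ω (k+1) + cfDen ω k

lemma gaussMap_props {x : ℝ} (hx : Irrational x) (h0 : 0 < x) (h1 : x < 1) :
    Irrational (gaussMap x) ∧ 0 < gaussMap x ∧ gaussMap x < 1 := by
  have hinv : Irrational x⁻¹ := hx.inv
  have hirr : Irrational (gaussMap x) := by
    unfold gaussMap Int.fract; exact hinv.sub_intCast _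
  refine ⟨hirr, ?_, Int.fract_lt_one _⟩
  rcases lt_or_eq_of_le (Int.fract_nonneg x⁻¹) with h | h
  · exact h
  · exfalso; exact hirr ⟨0, by simpa [gaussMap] using h⟩

lemma gIter_props (ω : ℝ) (hω : Irrational ω) (h0 : 0 < ω) (h1 : ω < 1) (n : ℕ) :
    Irrational (gIter ω n) ∧ 0 < gIter ω n ∧ gIter ω n < 1 := by
  induction n with
  | zero => exact ⟨hω, h0, h1⟩
  | succ n ih =>
    have : gIter ω (n+1) = gaussMap (gIter ω n) := by
      simp [gIter, Function.iterate_succ_apply']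
    rw [this]
    exact gaussMap_props ih.1 ih.2.1 ih.2.2

lemma gIter_succ (ω : ℝ) (n : ℕ) :
    gIter ω (n+1) = (gIter ω n)⁻¹ - ⌊(gIter ω n)⁻¹⌋ := by
  rw [show gIter ω (n+1) = gaussMap (gIter ω n) from by
    simp [gIter, Function.iterate_succ_apply']]
  rfl

section Main
variable (ω : ℝ) (hω : Irrational ω) (h0 : 0 < ω) (h1 : ω < 1)
include hω h0 h1

lemma floor_inv_ge (n : ℕ) : 1 ≤ (⌊(gIter ω n)⁻¹⌋ : ℝ) := by
  obtain ⟨_, hp, hl⟩ := gIter_props ω hω h0 h1 n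
  have : (1:ℝ) ≤ (gIter ω n)⁻¹ := le_of_lt ((one_lt_inv₀ hp).mpr hl)
  exact_mod_cast Int.le_floor.mpr (by exact_mod_cast this)

omit hω h0 h1 in
lemma betaPred_succ (n : ℕ) : betaPred ω (n+1) = betaPred ω n * gIter ω n :=
  Finset.prod_range_succ _ _

lemma betaPred_pos (n : ℕ) : 0 < betaPred ω n := by
  apply Finset.prod_pos
  intro j _
  exact (gIter_props ω hω h0 h1 j).2.1

lemma betaPred_le_one (n : ℕ) : betaPred ω n ≤ 1 := by
  apply Finset.prod_le_one
  · intro j _; exact (gIter_props ω hω h0 h1 j).2.1.le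
  · intro j _; exact (gIter_props ω hω h0 h1 j).2.2.le

lemma betaPred_lt (n : ℕ) : betaPred ω (n+1) < betaPred ω n := by
  rw [betaPred_succ]
  nth_rewrite 2 [show betaPred ω n = betaPred ω n * 1 from (mul_one _).symm]
  exact mul_lt_mul_of_pos_left (gIter_props ω hω h0 h1 n).2.2
    (betaPred_pos ω hω h0 h1 n)

lemma beta_rec (n : ℕ) :
    betaPred ω (n+2) = betaPred ω n - (⌊(gIter ω n)⁻¹⌋ : ℝ) * betaPred ω (n+1) := by
  have hne : gIter ω n ≠ 0 := ne_of_gt (gIter_props ω hω h0 h1 n).2.1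
  rw [betaPred_succ, gIter_succ, betaPred_succ]
  field_simp

omit hω h0 h1 in
lemma gIter_zero : gIter ω 0 = ω := rfl

lemma cfDen_ge_one : ∀ n, 1 ≤ cfDen ω n := by
  have key : ∀ n, 1 ≤ cfDen ω n ∧ 1 ≤ cfDen ω (n+1) := by
    intro n
    induction n with
    | zero =>
      constructor
      · simp [cfDen]
      · show (1:ℝ) ≤ cfDen ω 1
        have := floor_inv_ge ω hω h0 h1 0
        rw [gIter_zero] at this
        simpa [cfDen] using this
    | succ n ih =>
      refine ⟨ih.2, ?_⟩
      show (1:ℝ) ≤ cfDen ω (n+2)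
      have ha := floor_inv_ge ω hω h0 h1 (n+1)
      rw [show cfDen ω (n+2) = (⌊(gIter ω (n+1))⁻¹⌋ : ℝ) * cfDen ω (n+1) + cfDen ω n from rfl]
      nlinarith [ih.1, ih.2]
  exact fun n => (key n).1

lemma cfDen_mono (n : ℕ) : cfDen ω n ≤ cfDen ω (n+1) := by
  cases n with
  | zero =>
    have := floor_inv_ge ω hω h0 h1 0
    rw [gIter_zero] at this
    simpa [cfDen] using this
  | succ n =>
    have ha := floor_inv_ge ω hω h0 h1 (n+1)
    have h1n := cfDen_ge_one ω hω h0 h1 n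
    have h2n := cfDen_ge_one ω hω h0 h1 (n+1)
    rw [show cfDen ω (n+2) = (⌊(gIter ω (n+1))⁻¹⌋ : ℝ) * cfDen ω (n+1) + cfDen ω n from rfl]
    nlinarith

lemma cfDen_two_step (n : ℕ) : 2 * cfDen ω n ≤ cfDen ω (n+2) := by
  have ha := floor_inv_ge ω hω h0 h1 (n+1)
  have h1n := cfDen_ge_one ω hω h0 h1 n
  have h2n := cfDen_ge_one ω hω h0 h1 (n+1)
  have hm := cfDen_mono ω hω h0 h1 n
  rw [show cfDen ω (n+2) = (⌊(gIter ω (n+1))⁻¹⌋ : ℝ) * cfDen ω (n+1) + cfDen ω n from rfl]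
  nlinarith

lemma cfDen_pow (j : ℕ) : (2:ℝ)^j ≤ cfDen ω (2*j) ∧ (2:ℝ)^j ≤ cfDen ω (2*j+1) := by
  induction j with
  | zero => simpa using ⟨cfDen_ge_one ω hω h0 h1 0, cfDen_ge_one ω hω h0 h1 1⟩
  | succ j ih =>
    have e1 : 2*(j+1) = 2*j + 2 := by ring
    have e2 : 2*(j+1)+1 = (2*j+1) + 2 := by ring
    constructor
    · rw [e1]
      have := cfDen_two_step ω hω h0 h1 (2*j)
      calc (2:ℝ)^(j+1) = 2 * 2^j := by ring
        _ ≤ 2 * cfDen ω (2*j) := by nlinarith [ih.1]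
        _ ≤ _ := this
    · rw [e2]
      have := cfDen_two_step ω hω h0 h1 (2*j+1)
      calc (2:ℝ)^(j+1) = 2 * 2^j := by ring
        _ ≤ 2 * cfDen ω (2*j+1) := by nlinarith [ih.2]
        _ ≤ _ := this

lemma ident : ∀ n, cfDen ω (n+1) * betaPred ω (n+1) + cfDen ω n * betaPred ω (n+2) = 1 := by
  intro n
  induction n with
  | zero =>
    have hb2 := beta_rec ω hω h0 h1 0
    rw [gIter_zero] at hb2
    have hb1 : betaPred ω 1 = ω := by simp [betaPred, gIter_zero]
    have hb0 : betaPred ω 0 = 1 := by simp [betaPred]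
    rw [show cfDen ω 1 = (⌊ω⁻¹⌋ : ℝ) from rfl, show cfDen ω 0 = 1 from rfl, hb2, hb1, hb0]
    ring
  | succ n ih =>
    have hbr := beta_rec ω hω h0 h1 (n+1)
    rw [show cfDen ω (n+2) = (⌊(gIter ω (n+1))⁻¹⌋ : ℝ) * cfDen ω (n+1) + cfDen ω n from rfl,
      hbr]
    linear_combination ih

lemma c_bounds (n : ℕ) :
    cfDen ω n * betaPred ω n ≤ 1 ∧ 1/2 < cfDen ω n * betaPred ω n := by
  cases n with
  | zero => norm_num [show cfDen ω 0 = 1 from rfl, show betaPred ω 0 = 1 from by simp [betaPred]]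
  | succ n =>
    have hid := ident ω hω h0 h1 n
    have hq1 := cfDen_ge_one ω hω h0 h1 n
    have hq2 := cfDen_mono ω hω h0 h1 n
    have hb1 := betaPred_pos ω hω h0 h1 (n+1)
    have hb2 := betaPred_pos ω hω h0 h1 (n+2)
    have hlt := betaPred_lt ω hω h0 h1 (n+1)
    constructor
    · nlinarith
    · nlinarith

omit hω h0 h1 in
lemma log_le_div_e {y : ℝ} (hy : 0 < y) : Real.log y ≤ y / Real.exp 1 := by
  have he : (0:ℝ) < Real.exp 1 := Real.exp_pos 1
  have h2 : Real.log (y / Real.exp 1) ≤ y / Real.exp 1 - 1 :=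
    Real.log_le_sub_one_of_pos (by positivity)
  have h3 : Real.log (y / Real.exp 1) = Real.log y - 1 := by
    rw [Real.log_div (ne_of_gt hy) (ne_of_gt he), Real.log_exp]
  linarith

omit hω h0 h1 in
lemma log_two_mul_le {q : ℝ} (hq : 1 ≤ q) :
    Real.log (2*q) ≤ (2 * Real.sqrt 2 / Real.exp 1) * Real.sqrt q := by
  have hq0 : (0:ℝ) < q := by linarith
  have h1 : Real.log (2*q) = 2 * Real.log (Real.sqrt (2*q)) := by
    rw [Real.log_sqrt (by positivity)]; ring
  have h2 : Real.log (Real.sqrt (2*q)) ≤ Real.sqrt (2*q) / Real.exp 1 :=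
    log_le_div_e (Real.sqrt_pos.mpr (by positivity))
  have h3 : Real.sqrt (2*q) = Real.sqrt 2 * Real.sqrt q := Real.sqrt_mul (by norm_num) q
  have he : (0:ℝ) < Real.exp 1 := Real.exp_pos 1
  rw [h1, h3]
  rw [h3] at h2
  rw [div_eq_mul_inv] at *
  nlinarith [Real.sqrt_nonneg q, Real.sqrt_nonneg 2, inv_pos.mpr he]

omit hω h0 h1 in
lemma log_two_mul_div_le {q : ℝ} (hq : 1 ≤ q) :
    Real.log (2*q) / q ≤ (2 * Real.sqrt 2 / Real.exp 1) * (Real.sqrt q)⁻¹ := by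
  have hq0 : (0:ℝ) < q := by linarith
  have hsq : (0:ℝ) < Real.sqrt q := Real.sqrt_pos.mpr hq0
  have key := log_two_mul_le hq
  have hqq : q = Real.sqrt q * Real.sqrt q := (Real.mul_self_sqrt hq0.le).symm
  rw [div_le_iff₀ hq0]
  calc Real.log (2*q) ≤ (2 * Real.sqrt 2 / Real.exp 1) * Real.sqrt q := key
    _ = (2 * Real.sqrt 2 / Real.exp 1) * (Real.sqrt q)⁻¹ * q := by
        rw [mul_assoc]; congr 1; rw [hqq]; field_simp; rw [Real.sqrt_sq hsq.le]

omit hω h0 h1 in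
lemma sqrt_two_pow (J : ℕ) : Real.sqrt ((2:ℝ)^J) = (Real.sqrt 2)^J := by
  rw [Real.sqrt_eq_iff_eq_sq (by positivity) (by positivity), ← pow_mul, mul_comm, pow_mul,
    Real.sq_sqrt (by norm_num : (0:ℝ) ≤ 2)]

lemma one_sub_c_le (l : ℕ) :
    (1 - cfDen ω l * betaPred ω l) * cfDen ω (l+1) ≤ cfDen ω l := by
  cases l with
  | zero =>
    have : cfDen ω 0 * betaPred ω 0 = 1 := by
      norm_num [show cfDen ω 0 = 1 from rfl, show betaPred ω 0 = 1 from by simp [betaPred]]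
    rw [this]
    simp [cfDen_ge_one ω hω h0 h1 0]
    linarith [cfDen_ge_one ω hω h0 h1 0]
  | succ m =>
    have hid := ident ω hω h0 h1 m
    have h1c : 1 - cfDen ω (m+1) * betaPred ω (m+1) = cfDen ω m * betaPred ω (m+2) := by
      linarith
    rw [h1c]
    have hmono := cfDen_mono ω hω h0 h1 m
    have hC := (c_bounds ω hω h0 h1 (m+2)).1
    have hq0 := cfDen_ge_one ω hω h0 h1 m
    have hq1 := cfDen_ge_one ω hω h0 h1 (m+1)
    have hq2 := cfDen_ge_one ω hω h0 h1 (m+2)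
    have hb := betaPred_pos ω hω h0 h1 (m+2)
    -- cfDen m * betaPred (m+2) * cfDen (m+2) ≤ cfDen (m+1) * (cfDen (m+2) * betaPred (m+2)) ≤ cfDen (m+1)
    calc cfDen ω m * betaPred ω (m+2) * cfDen ω (m+2)
        = cfDen ω m * (cfDen ω (m+2) * betaPred ω (m+2)) := by ring
      _ ≤ cfDen ω m * 1 := by nlinarith
      _ ≤ cfDen ω (m+1) := by linarith

omit hω h0 h1 in
lemma abs_mul_le_aux {c d L : ℝ} (hc0 : 0 ≤ c) (hc1 : c ≤ 1) (hdl : -L ≤ d) (hdu : d ≤ L) :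
    |c*d| ≤ L := by
  rw [abs_le]
  constructor <;> nlinarith

lemma term_bound (l : ℕ) :
    |betaPred ω l * Real.log (gIter ω l) + Real.log (cfDen ω (l+1)) / cfDen ω l|
      ≤ (2 * Real.sqrt 2 / Real.exp 1) *
        ((Real.sqrt (cfDen ω l))⁻¹ + (Real.sqrt (cfDen ω (l+1)))⁻¹) := by
  have hq1 : 1 ≤ cfDen ω l := cfDen_ge_one ω hω h0 h1 l
  have hQ1 : 1 ≤ cfDen ω (l+1) := cfDen_ge_one ω hω h0 h1 (l+1)
  have hq0 : 0 < cfDen ω l := by linarith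
  have hQ0 : 0 < cfDen ω (l+1) := by linarith
  have hb0 : 0 < betaPred ω l := betaPred_pos ω hω h0 h1 l
  have hB0 : 0 < betaPred ω (l+1) := betaPred_pos ω hω h0 h1 (l+1)
  have hg0 : 0 < gIter ω l := (gIter_props ω hω h0 h1 l).2.1
  set q := cfDen ω l with hqdef
  set Q := cfDen ω (l+1) with hQdef
  set b := betaPred ω l with hbdef
  set B := betaPred ω (l+1) with hBdef
  set c := q * b with hcdef
  set C := Q * B with hCdef
  have hcb := c_bounds ω hω h0 h1 l
  have hCb := c_bounds ω hω h0 h1 (l+1)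
  have hc1 : c ≤ 1 := hcb.1
  have hc2 : 1/2 < c := hcb.2
  have hC1 : C ≤ 1 := hCb.1
  have hC2 : 1/2 < C := hCb.2
  have hc0 : 0 < c := by positivity
  have hC0 : 0 < C := by positivity
  -- logs
  have hlogq : 0 ≤ Real.log q := Real.log_nonneg hq1
  have hlogQ : 0 ≤ Real.log Q := Real.log_nonneg hQ1
  have hlogc1 : Real.log c ≤ 0 := Real.log_nonpos hc0.le hc1
  have hlogC1 : Real.log C ≤ 0 := Real.log_nonpos hC0.le hC1
  have hlog2 : (0:ℝ) < Real.log 2 := Real.log_pos (by norm_num)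
  have hlogc2 : -Real.log 2 ≤ Real.log c := by
    have := Real.log_le_log (by norm_num : (0:ℝ) < 1/2) hc2.le
    rwa [show Real.log (1/2) = -Real.log 2 by rw [one_div, Real.log_inv]] at this
  have hlogC2 : -Real.log 2 ≤ Real.log C := by
    have := Real.log_le_log (by norm_num : (0:ℝ) < 1/2) hC2.le
    rwa [show Real.log (1/2) = -Real.log 2 by rw [one_div, Real.log_inv]] at this
  -- decomposition of the term
  have hg : gIter ω l = B / b := by
    have := betaPred_succ ω l
    rw [← hbdef, ← hBdef] at this
    field_simp [ne_of_gt hb0]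
    linarith [this]
  have hlogg : Real.log (gIter ω l) =
      (Real.log C - Real.log c) - (Real.log Q - Real.log q) := by
    rw [hg, Real.log_div (ne_of_gt hB0) (ne_of_gt hb0)]
    rw [show Real.log c = Real.log q + Real.log b from by
      rw [hcdef, Real.log_mul (ne_of_gt hq0) (ne_of_gt hb0)]]
    rw [show Real.log C = Real.log Q + Real.log B from by
      rw [hCdef, Real.log_mul (ne_of_gt hQ0) (ne_of_gt hB0)]]
    ring
  have hbeq : b = c / q := by rw [hcdef]; field_simp
  have heq : b * Real.log (gIter ω l) + Real.log Q / q
      = ((1-c) * Real.log Q) / q + (c * Real.log q) / q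
        + (c * (Real.log C - Real.log c)) / q := by
    rw [hlogg, hbeq]
    field_simp
    ring
  -- bounds on the three pieces
  have hA := one_sub_c_le ω hω h0 h1 l
  rw [← hqdef, ← hQdef, ← hbdef, ← hcdef] at hA
  have t1 : ((1-c) * Real.log Q) / q ≤ Real.log Q / Q := by
    rw [div_le_div_iff₀ hq0 hQ0]
    calc (1-c) * Real.log Q * Q = ((1-c)*Q) * Real.log Q := by ring
      _ ≤ q * Real.log Q := mul_le_mul_of_nonneg_right hA hlogQ
      _ = Real.log Q * q := by ring
  have t1' : 0 ≤ ((1-c) * Real.log Q) / q :=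
    div_nonneg (mul_nonneg (by linarith) hlogQ) hq0.le
  have t2 : (c * Real.log q) / q ≤ Real.log q / q :=
    (div_le_div_iff_of_pos_right hq0).mpr (mul_le_of_le_one_left hlogq hc1)
  have t2' : 0 ≤ (c * Real.log q) / q := div_nonneg (mul_nonneg hc0.le hlogq) hq0.le
  have t3 : |(c * (Real.log C - Real.log c)) / q| ≤ Real.log 2 / q := by
    rw [abs_div, abs_of_pos hq0]
    exact (div_le_div_iff_of_pos_right hq0).mpr
      (abs_mul_le_aux hc0.le hc1 (by linarith) (by linarith))
  have t3l : -(Real.log 2 / q) ≤ (c * (Real.log C - Real.log c)) / q := (abs_le.mp t3).1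
  have t3u : (c * (Real.log C - Real.log c)) / q ≤ Real.log 2 / q := (abs_le.mp t3).2
  -- intermediate bound
  have hmid : |b * Real.log (gIter ω l) + Real.log Q / q|
      ≤ Real.log Q / Q + (Real.log q / q + Real.log 2 / q) := by
    rw [heq, abs_le]
    have hlq : 0 ≤ Real.log Q / Q := div_nonneg hlogQ hQ0.le
    have hlq2 : 0 ≤ Real.log q / q := div_nonneg hlogq hq0.le
    have hl2 : 0 ≤ Real.log 2 / q := div_nonneg hlog2.le hq0.le
    constructor <;> [linarith; linarith]
  -- convert to sqrt bounds
  have hQside : Real.log Q / Q ≤ (2 * Real.sqrt 2 / Real.exp 1) * (Real.sqrt Q)⁻¹ := by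
    have h2Q : Real.log Q ≤ Real.log (2*Q) := by
      rw [Real.log_mul (by norm_num) (ne_of_gt hQ0)]; linarith
    calc Real.log Q / Q ≤ Real.log (2*Q) / Q := by
          exact (div_le_div_iff_of_pos_right hQ0).mpr h2Q
      _ ≤ _ := log_two_mul_div_le hQ1
  have hqside : Real.log q / q + Real.log 2 / q
      ≤ (2 * Real.sqrt 2 / Real.exp 1) * (Real.sqrt q)⁻¹ := by
    have : Real.log q / q + Real.log 2 / q = Real.log (2*q) / q := by
      rw [Real.log_mul (by norm_num) (ne_of_gt hq0)]; ring
    rw [this]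
    exact log_two_mul_div_le hq1
  calc |b * Real.log (gIter ω l) + Real.log Q / q|
      ≤ Real.log Q / Q + (Real.log q / q + Real.log 2 / q) := hmid
    _ ≤ (2 * Real.sqrt 2 / Real.exp 1) * (Real.sqrt Q)⁻¹
        + (2 * Real.sqrt 2 / Real.exp 1) * (Real.sqrt q)⁻¹ := by linarith
    _ = (2 * Real.sqrt 2 / Real.exp 1) * ((Real.sqrt q)⁻¹ + (Real.sqrt Q)⁻¹) := by ring

lemma sqrtinv_le_pow (j : ℕ) :
    (Real.sqrt (cfDen ω (2*j)))⁻¹ ≤ ((Real.sqrt 2)⁻¹)^j ∧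
    (Real.sqrt (cfDen ω (2*j+1)))⁻¹ ≤ ((Real.sqrt 2)⁻¹)^j := by
  have hp := cfDen_pow ω hω h0 h1 j
  have hs2 : (0:ℝ) < Real.sqrt 2 := Real.sqrt_pos.mpr (by norm_num)
  have hsp : (0:ℝ) < (Real.sqrt 2)^j := pow_pos hs2 j
  constructor
  · have h1 : (Real.sqrt 2)^j ≤ Real.sqrt (cfDen ω (2*j)) := by
      rw [← sqrt_two_pow]
      exact Real.sqrt_le_sqrt hp.1
    calc (Real.sqrt (cfDen ω (2*j)))⁻¹ ≤ ((Real.sqrt 2)^j)⁻¹ :=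
          inv_anti₀ hsp h1
      _ = ((Real.sqrt 2)⁻¹)^j := by rw [inv_pow]
  · have h1 : (Real.sqrt 2)^j ≤ Real.sqrt (cfDen ω (2*j+1)) := by
      rw [← sqrt_two_pow]
      exact Real.sqrt_le_sqrt hp.2
    calc (Real.sqrt (cfDen ω (2*j+1)))⁻¹ ≤ ((Real.sqrt 2)^j)⁻¹ :=
          inv_anti₀ hsp h1
      _ = ((Real.sqrt 2)⁻¹)^j := by rw [inv_pow]

lemma sum_sqrtinv (J : ℕ) :
    ∑ l ∈ Finset.range (2*J), (Real.sqrt (cfDen ω l))⁻¹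
      ≤ 2 * (1 - (Real.sqrt 2)⁻¹)⁻¹ := by
  have hs2 : (1:ℝ) < Real.sqrt 2 := by
    rw [show (1:ℝ) = Real.sqrt 1 from (Real.sqrt_one).symm]
    exact Real.sqrt_lt_sqrt (by norm_num) (by norm_num)
  have hr0 : (0:ℝ) ≤ (Real.sqrt 2)⁻¹ := by positivity
  have hr1 : (Real.sqrt 2)⁻¹ < 1 := by
    rw [inv_lt_one_iff₀]; right; exact hs2
  have step : ∀ J : ℕ, ∑ l ∈ Finset.range (2*J), (Real.sqrt (cfDen ω l))⁻¹
      ≤ 2 * ∑ j ∈ Finset.range J, ((Real.sqrt 2)⁻¹)^j := by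
    intro J
    induction J with
    | zero => simp
    | succ J ih =>
      have h2J : 2*(J+1) = (2*J+1)+1 := by ring
      rw [h2J, Finset.sum_range_succ, Finset.sum_range_succ, Finset.sum_range_succ]
      have hb := sqrtinv_le_pow ω hω h0 h1 J
      linarith [hb.1, hb.2]
  have geom : ∑ j ∈ Finset.range J, ((Real.sqrt 2)⁻¹)^j ≤ (1 - (Real.sqrt 2)⁻¹)⁻¹ := by
    have := Summable.sum_le_tsum (Finset.range J) (fun i _ => by positivity)
      (summable_geometric_of_lt_one hr0 hr1)
    rwa [tsum_geometric_of_lt_one hr0 hr1] at this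
  linarith [step J, geom]

lemma final_numeric :
    (2 * Real.sqrt 2 / Real.exp 1) * (4 * (1 - (Real.sqrt 2)⁻¹)⁻¹) ≤ 18 := by
  have hs1 : (1.4:ℝ) ≤ Real.sqrt 2 := by
    rw [show Real.sqrt 2 = Real.sqrt 2 from rfl]
    have := Real.le_sqrt (by norm_num : (0:ℝ) ≤ 1.4) (by norm_num : (0:ℝ) ≤ 2)
    rw [this]
    norm_num
  have hs2 : Real.sqrt 2 ≤ 1.5 := by
    rw [Real.sqrt_le_iff]; norm_num
  have he : (2.7:ℝ) ≤ Real.exp 1 := by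
    linarith [Real.exp_one_gt_d9]
  have hsi : (Real.sqrt 2)⁻¹ ≤ (1.4:ℝ)⁻¹ := inv_anti₀ (by norm_num) hs1
  have h1r : (2/7:ℝ) ≤ 1 - (Real.sqrt 2)⁻¹ := by
    rw [show ((1.4:ℝ))⁻¹ = 5/7 from by norm_num] at hsi
    linarith
  have hM : (1 - (Real.sqrt 2)⁻¹)⁻¹ ≤ 7/2 := by
    rw [show (7/2:ℝ) = (2/7:ℝ)⁻¹ from by norm_num]
    exact inv_anti₀ (by norm_num) h1r
  have hM0 : (0:ℝ) ≤ (1 - (Real.sqrt 2)⁻¹)⁻¹ := by positivity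
  have hK : 2 * Real.sqrt 2 / Real.exp 1 ≤ 10/9 := by
    rw [show (10/9:ℝ) = 3 / 2.7 from by norm_num]
    exact div_le_div₀ (by norm_num) (by linarith) (by norm_num) he
  have hK0 : (0:ℝ) ≤ 2 * Real.sqrt 2 / Real.exp 1 := by positivity
  nlinarith

end Main


/-- Uniform bound: for every `k > 0`,
`|∑_{l=0}^k (β_{l-1} log ω_l + (log q_{l+1})/q_l)| ≤ 18`. -/
theorem stmt7 (ω : ℝ) (hω : Irrational ω) (h0 : 0 < ω) (h1 : ω < 1) :
    ∀ k : ℕ, 0 < k →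
      |∑ l ∈ Finset.range (k + 1),
          (betaPred ω l * Real.log (gIter ω l) + Real.log (cfDen ω (l + 1)) / cfDen ω l)| ≤ 18 := by
  intro k _
  set K := 2 * Real.sqrt 2 / Real.exp 1 with hKdef
  have hK0 : (0:ℝ) ≤ K := by positivity
  set f : ℕ → ℝ := fun l => (Real.sqrt (cfDen ω l))⁻¹ with hfdef
  have hf0 : ∀ l, 0 ≤ f l := fun l => by positivity
  have habs : |∑ l ∈ Finset.range (k + 1),
      (betaPred ω l * Real.log (gIter ω l) + Real.log (cfDen ω (l + 1)) / cfDen ω l)|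
      ≤ ∑ l ∈ Finset.range (k + 1),
        |betaPred ω l * Real.log (gIter ω l) + Real.log (cfDen ω (l + 1)) / cfDen ω l| :=
    Finset.abs_sum_le_sum_abs _ _
  have h2 : ∑ l ∈ Finset.range (k + 1),
        |betaPred ω l * Real.log (gIter ω l) + Real.log (cfDen ω (l + 1)) / cfDen ω l|
      ≤ ∑ l ∈ Finset.range (k + 1), K * (f l + f (l+1)) :=
    Finset.sum_le_sum (fun l _ => term_bound ω hω h0 h1 l)
  have hsplit : ∑ l ∈ Finset.range (k + 1), K * (f l + f (l+1))
      = K * ((∑ l ∈ Finset.range (k + 1), f l) + ∑ l ∈ Finset.range (k + 1), f (l+1)) := by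
    rw [← Finset.sum_add_distrib, ← Finset.mul_sum]
  have hS : ∀ N : ℕ, ∑ l ∈ Finset.range N, f l ≤ 2 * (1 - (Real.sqrt 2)⁻¹)⁻¹ := by
    intro N
    calc ∑ l ∈ Finset.range N, f l ≤ ∑ l ∈ Finset.range (2*N), f l :=
          Finset.sum_le_sum_of_subset_of_nonneg
            (Finset.range_subset_range.mpr (by omega)) (fun i _ _ => hf0 i)
      _ ≤ _ := sum_sqrtinv ω hω h0 h1 N
  have hshift : ∑ l ∈ Finset.range (k + 1), f (l+1) ≤ ∑ l ∈ Finset.range (k + 2), f l := by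
    rw [Finset.sum_range_succ' f (k+1)]
    have := hf0 0
    linarith
  have hsum : (∑ l ∈ Finset.range (k + 1), f l) + ∑ l ∈ Finset.range (k + 1), f (l+1)
      ≤ 4 * (1 - (Real.sqrt 2)⁻¹)⁻¹ := by
    have a1 := hS (k+1)
    have a2 := hS (k+2)
    linarith
  calc |∑ l ∈ Finset.range (k + 1),
      (betaPred ω l * Real.log (gIter ω l) + Real.log (cfDen ω (l + 1)) / cfDen ω l)|
      ≤ ∑ l ∈ Finset.range (k + 1), K * (f l + f (l+1)) := le_trans habs h2
    _ = K * ((∑ l ∈ Finset.range (k + 1), f l) + ∑ l ∈ Finset.range (k + 1), f (l+1)) := hsplit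
    _ ≤ K * (4 * (1 - (Real.sqrt 2)⁻¹)⁻¹) := mul_le_mul_of_nonneg_left hsum hK0
    _ ≤ 18 := final_numeric ω hω h0 h1
end

section
/- Define, for s ≥ 0, the Bruno-s condition for an irrational ω ∈ (0,1): limsup_{n→∞} (∑_{j=0}^{k(n)} (log q_{j+1})/q_j − s·log n) < +∞, where q_j are the convergent denominators of ω and k(n) is defined by q_{k(n)} ≤ n < q_{k(n)+1}. Then ω satisfies the Bruno-s condition if and only if limsup_{k→∞} (∑_{j=0}^k β_{j-1}·log(1/ω_j) + s·log β_{k-1}) < +∞, where ω_j are the Gauss map iterates of ω and β_k = ∏_{j=0}^k ω_j. -/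
/-- `kOf ω n` is the index `k(n)` with `q_{k(n)} ≤ n < q_{k(n)+1}`. -/
noncomputable def kOf (ω : ℝ) (n : ℕ) : ℕ := sSup {k : ℕ | cfDen ω k ≤ (n : ℝ)}

/-- The Bruno-`s` condition in terms of the convergent denominators:
`limsup_n (∑_{j=0}^{k(n)} (log q_{j+1})/q_j − s log n) < +∞`. -/
def BrunoQ (s ω : ℝ) : Prop :=
  Filter.IsBoundedUnder (· ≤ ·) Filter.atTop (fun n : ℕ =>
    (∑ j ∈ Finset.range (kOf ω n + 1), Real.log (cfDen ω (j + 1)) / cfDen ω j)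
      - s * Real.log n)

/-- The Bruno-`s` condition in terms of the Gauss map:
`limsup_k (∑_{j=0}^k β_{j-1} log(1/ω_j) + s log β_{k-1}) < +∞`. -/
def BrunoB (s ω : ℝ) : Prop :=
  Filter.IsBoundedUnder (· ≤ ·) Filter.atTop (fun k : ℕ =>
    (∑ j ∈ Finset.range (k + 1), betaPred ω j * Real.log (gIter ω j)⁻¹)
      + s * Real.log (betaPred ω k))

namespace Bruno8

structure Good (x : ℝ) : Prop where
  pos : 0 < x
  lt_one : x < 1
  irr : Irrational x

lemma gIter_zero (ω : ℝ) : gIter ω 0 = ω := rfl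

lemma gIter_succ (ω : ℝ) (n : ℕ) : gIter ω (n+1) = Int.fract (gIter ω n)⁻¹ := by
  unfold gIter
  rw [Function.iterate_succ_apply']
  rfl

lemma Good.gauss {x : ℝ} (h : Good x) : Good (Int.fract x⁻¹) := by
  have hinv : Irrational x⁻¹ := h.irr.inv
  have hirr : Irrational (Int.fract x⁻¹) := by
    unfold Int.fract
    exact Irrational.sub_intCast hinv _
  have hne : Int.fract x⁻¹ ≠ 0 := fun h0 => hirr ⟨0, by rw [h0]; norm_num⟩
  exact ⟨(Int.fract_nonneg x⁻¹).lt_of_ne (Ne.symm hne), Int.fract_lt_one _, hirr⟩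

lemma Good.gIter {ω : ℝ} (h : Good ω) (n : ℕ) : Good (gIter ω n) := by
  induction n with
  | zero => exact h
  | succ n ih => rw [gIter_succ]; exact ih.gauss

lemma Good.one_lt_inv' {x : ℝ} (h : Good x) : 1 < x⁻¹ :=
  (one_lt_inv₀ h.pos).mpr h.lt_one

lemma Good.one_le_floor {x : ℝ} (h : Good x) : 1 ≤ ⌊x⁻¹⌋ :=
  Int.le_floor.mpr (by exact_mod_cast h.one_lt_inv'.le)

lemma Good.inv_eq {x : ℝ} (h : Good x) : x⁻¹ = (⌊x⁻¹⌋ : ℝ) + Int.fract x⁻¹ := by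
  rw [Int.floor_add_fract]


noncomputable def QN (ω : ℝ) : ℕ → ℕ
  | 0 => 1
  | 1 => (⌊ω⁻¹⌋).toNat
  | (k+2) => (⌊(gIter ω (k+1))⁻¹⌋).toNat * QN ω (k+1) + QN ω k

variable {ω : ℝ}

lemma one_le_toNat_floor {x : ℝ} (h : Good x) : 1 ≤ (⌊x⁻¹⌋).toNat := by
  have := h.one_le_floor
  omega

lemma one_le_QN (h : Good ω) : ∀ k, 1 ≤ QN ω k := by
  intro k
  induction k using Nat.strong_induction_on with
  | _ k ih =>
    match k with
    | 0 => simp [QN]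
    | 1 => exact one_le_toNat_floor h
    | (k+2) =>
      have h1 := ih (k+1) (by omega)
      have h2 := ih k (by omega)
      have h3 := one_le_toNat_floor (h.gIter (k+1))
      simp only [QN]
      nlinarith

lemma cfDen_eq (h : Good ω) : ∀ k, cfDen ω k = (QN ω k : ℝ) := by
  intro k
  induction k using Nat.strong_induction_on with
  | _ k ih =>
    match k with
    | 0 => simp [QN, cfDen]
    | 1 =>
      have := (h.gIter 0).one_le_floor
      simp only [QN, cfDen, gIter_zero] at *
      have h4 : (⌊ω⁻¹⌋.toNat : ℤ) = ⌊ω⁻¹⌋ := Int.toNat_of_nonneg (by omega)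
      exact_mod_cast h4.symm
    | (k+2) =>
      have h1 := ih (k+1) (by omega)
      have h2 := ih k (by omega)
      have h3 := (h.gIter (k+1)).one_le_floor
      have h4 : ((⌊(gIter ω (k+1))⁻¹⌋.toNat : ℕ) : ℝ) = (⌊(gIter ω (k+1))⁻¹⌋ : ℝ) := by
        exact_mod_cast congrArg (Int.cast : ℤ → ℝ) (Int.toNat_of_nonneg (by omega))
      simp only [QN, cfDen, h1, h2]
      push_cast
      rw [h4]

lemma QN_succ_lt (h : Good ω) (k : ℕ) : QN ω (k+1) < QN ω (k+2) := by
  have h1 := one_le_QN h (k+1)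
  have h2 := one_le_QN h k
  have h3 := one_le_toNat_floor (h.gIter (k+1))
  simp only [QN]
  nlinarith

lemma QN_le_succ (h : Good ω) (k : ℕ) : QN ω k ≤ QN ω (k+1) := by
  match k with
  | 0 => simpa [QN] using one_le_QN h 1
  | (k+1) => exact (QN_succ_lt h k).le

lemma QN_mono (h : Good ω) : Monotone (QN ω) :=
  monotone_nat_of_le_succ (QN_le_succ h)

lemma two_QN_le (h : Good ω) (k : ℕ) : 2 * QN ω k ≤ QN ω (k+2) := by
  have h1 := one_le_QN h (k+1)
  have h3 := one_le_toNat_floor (h.gIter (k+1))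
  have h4 := QN_le_succ h k
  simp only [QN]
  nlinarith

lemma le_two_QN (h : Good ω) : ∀ k, k ≤ 2 * QN ω k := by
  intro k
  induction k using Nat.strong_induction_on with
  | _ k ih =>
    match k with
    | 0 => omega
    | 1 => have := one_le_QN h 1; omega
    | (k+2) =>
      have h1 := ih k (by omega)
      have h2 := two_QN_le h k
      have h3 := one_le_QN h k
      omega

lemma cfDen_pos (h : Good ω) (k : ℕ) : 0 < cfDen ω k := by
  rw [cfDen_eq h]
  exact_mod_cast one_le_QN h k

lemma one_le_cfDen (h : Good ω) (k : ℕ) : 1 ≤ cfDen ω k := by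
  rw [cfDen_eq h]
  exact_mod_cast one_le_QN h k

lemma cfDen_le_succ (h : Good ω) (k : ℕ) : cfDen ω k ≤ cfDen ω (k+1) := by
  rw [cfDen_eq h, cfDen_eq h]
  exact_mod_cast QN_le_succ h k

lemma cfDen_mono (h : Good ω) {j k : ℕ} (hjk : j ≤ k) : cfDen ω j ≤ cfDen ω k := by
  rw [cfDen_eq h, cfDen_eq h]
  exact_mod_cast QN_mono h hjk


lemma betaPred_zero (ω : ℝ) : betaPred ω 0 = 1 := by simp [betaPred]

lemma betaPred_succ (ω : ℝ) (k : ℕ) : betaPred ω (k+1) = betaPred ω k * gIter ω k :=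
  Finset.prod_range_succ _ _

lemma betaPred_pos (h : Good ω) (k : ℕ) : 0 < betaPred ω k := by
  unfold betaPred
  exact Finset.prod_pos fun j _ => (h.gIter j).pos

lemma betaPred_rec (h : Good ω) (k : ℕ) :
    betaPred ω (k+2) = betaPred ω k - (⌊(gIter ω k)⁻¹⌋ : ℝ) * betaPred ω (k+1) := by
  have hx : gIter ω k * (gIter ω k)⁻¹ = 1 := mul_inv_cancel₀ (h.gIter k).pos.ne'
  rw [show k+2 = (k+1)+1 from rfl, betaPred_succ, gIter_succ, Int.fract, betaPred_succ]
  linear_combination betaPred ω k * hx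

lemma ident (h : Good ω) : ∀ m : ℕ,
    cfDen ω (m+1) * betaPred ω (m+1) + cfDen ω m * betaPred ω (m+2) = 1 := by
  intro m
  induction m with
  | zero =>
    have hx : ω * ω⁻¹ = 1 := mul_inv_cancel₀ h.pos.ne'
    have hfr : gIter ω 1 = ω⁻¹ - (⌊ω⁻¹⌋ : ℝ) := by
      rw [gIter_succ, gIter_zero, Int.fract]
    simp only [show (2:ℕ) = 1+1 from rfl, betaPred_succ, betaPred_zero, gIter_zero, hfr,
      cfDen]
    linear_combination hx
  | succ m ih =>
    have hrec := betaPred_rec h (m+1)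
    have hq : cfDen ω (m+2) = (⌊(gIter ω (m+1))⁻¹⌋ : ℝ) * cfDen ω (m+1) + cfDen ω m := rfl
    rw [show m+1+2 = (m+1)+2 from rfl, hrec, hq]
    linear_combination ih

lemma beta_formula (h : Good ω) (m : ℕ) :
    betaPred ω (m+1) * (cfDen ω (m+1) + gIter ω (m+1) * cfDen ω m) = 1 := by
  have hI := ident h m
  have hs : betaPred ω (m+2) = betaPred ω (m+1) * gIter ω (m+1) := betaPred_succ ω (m+1)
  linear_combination hI - cfDen ω m * hs

lemma beta_mul_lt_one (h : Good ω) (m : ℕ) : betaPred ω (m+1) * cfDen ω (m+1) < 1 := by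
  have hf := beta_formula h m
  nlinarith [mul_pos (mul_pos (betaPred_pos h (m+1)) ((h.gIter (m+1)).pos)) (cfDen_pos h m)]

lemma beta_mul_le_one (h : Good ω) (k : ℕ) : betaPred ω k * cfDen ω k ≤ 1 := by
  match k with
  | 0 => simp [betaPred_zero, cfDen]
  | (m+1) => exact (beta_mul_lt_one h m).le

lemma half_lt_beta_mul (h : Good ω) (k : ℕ) : 1 < 2 * (betaPred ω k * cfDen ω k) := by
  match k with
  | 0 => simp [betaPred_zero, cfDen]
  | (m+1) =>
    have hf := beta_formula h m
    have h1 : cfDen ω m ≤ cfDen ω (m+1) := cfDen_le_succ h m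
    have hxp : gIter ω (m+1) * cfDen ω m < cfDen ω (m+1) := by
      nlinarith [(h.gIter (m+1)).lt_one, (h.gIter (m+1)).pos, cfDen_pos h m]
    nlinarith [mul_pos (betaPred_pos h (m+1)) (sub_pos.mpr hxp)]

lemma beta_lt_inv_cfDen (h : Good ω) (m : ℕ) : betaPred ω (m+1) < (cfDen ω (m+1))⁻¹ := by
  have h1 := beta_mul_lt_one h m
  have hq := cfDen_pos h (m+1)
  rw [← one_div, lt_div_iff₀ hq]
  linarith


/-- The `j`-th term of the `q`-sum. -/
noncomputable def TA (ω : ℝ) (j : ℕ) : ℝ := Real.log (cfDen ω (j+1)) / cfDen ω j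
/-- The `j`-th term of the `β`-sum. -/
noncomputable def TB (ω : ℝ) (j : ℕ) : ℝ := betaPred ω j * Real.log (gIter ω j)⁻¹

lemma log_two_le_one : Real.log 2 ≤ 1 := by
  nlinarith [Real.log_le_sub_one_of_pos (show (0:ℝ) < 2 by norm_num)]

lemma aux_sqrt {t : ℝ} (ht : 1 ≤ t) : (Real.log t + 2) * t⁻¹ ≤ 3 / Real.sqrt t := by
  have ht0 : (0:ℝ) < t := by linarith
  have hs1 : 1 ≤ Real.sqrt t := by
    rw [show (1:ℝ) = Real.sqrt 1 by simp]
    exact Real.sqrt_le_sqrt ht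
  have hs0 : 0 < Real.sqrt t := by linarith
  have hss : Real.sqrt t * Real.sqrt t = t := Real.mul_self_sqrt ht0.le
  have hlog : Real.log t + 1 ≤ 2 * Real.sqrt t := by
    have h1 : Real.log (Real.sqrt t) ≤ Real.sqrt t - 1 :=
      Real.log_le_sub_one_of_pos hs0
    have h2 : Real.log t = 2 * Real.log (Real.sqrt t) := by
      rw [Real.log_sqrt ht0.le]; ring
    linarith
  have key : t⁻¹ * Real.sqrt t = (Real.sqrt t)⁻¹ := by
    field_simp
    exact Real.sq_sqrt ht0.le
  have h3 : Real.log t + 2 ≤ 3 * Real.sqrt t := by linarith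
  rw [le_div_iff₀ hs0]
  calc (Real.log t + 2) * t⁻¹ * Real.sqrt t
      = (Real.log t + 2) * (t⁻¹ * Real.sqrt t) := by ring
    _ = (Real.log t + 2) * (Real.sqrt t)⁻¹ := by rw [key]
    _ ≤ (3 * Real.sqrt t) * (Real.sqrt t)⁻¹ := by
        apply mul_le_mul_of_nonneg_right h3 (by positivity)
    _ = 3 := by field_simp


lemma term_zero (h : Good ω) : |TB ω 0 - TA ω 0| ≤ 1 := by
  have hq1 : cfDen ω 1 = (⌊ω⁻¹⌋ : ℝ) := rfl
  have hfl : 1 ≤ (⌊ω⁻¹⌋ : ℝ) := by exact_mod_cast h.one_le_floor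
  have hw1 : gIter ω 1 = Int.fract ω⁻¹ := by rw [gIter_succ, gIter_zero]
  have hfr0 : 0 < Int.fract ω⁻¹ := (h.gauss).pos
  have hfr1 : Int.fract ω⁻¹ < 1 := (h.gauss).lt_one
  have hinv : ω⁻¹ = (⌊ω⁻¹⌋ : ℝ) + Int.fract ω⁻¹ := h.inv_eq
  have hTA : TA ω 0 = Real.log (⌊ω⁻¹⌋ : ℝ) := by
    simp [TA, hq1, cfDen]
  have hTB : TB ω 0 = Real.log ω⁻¹ := by
    simp [TB, betaPred_zero, gIter_zero]
  have hle : Real.log (⌊ω⁻¹⌋ : ℝ) ≤ Real.log ω⁻¹ :=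
    Real.log_le_log (by linarith) (by linarith)
  have hge : Real.log ω⁻¹ ≤ Real.log 2 + Real.log (⌊ω⁻¹⌋ : ℝ) := by
    rw [← Real.log_mul (by norm_num) (by linarith)]
    exact Real.log_le_log (by linarith) (by linarith)
  rw [hTA, hTB, abs_le]
  constructor
  · linarith
  · linarith [log_two_le_one]

set_option maxHeartbeats 2000000 in
lemma term_bound (h : Good ω) (m : ℕ) :
    |TB ω (m+1) - TA ω (m+1)| ≤
      3 / Real.sqrt (cfDen ω (m+1)) + 3 / Real.sqrt (cfDen ω (m+2)) := by
  set p := cfDen ω m with hp_def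
  set q := cfDen ω (m+1) with hq_def
  set q' := cfDen ω (m+2) with hq'_def
  set x := gIter ω (m+1) with hx_def
  set x' := gIter ω (m+2) with hx'_def
  set β := betaPred ω (m+1) with hβ_def
  have hp1 : 1 ≤ p := one_le_cfDen h m
  have hq1 : 1 ≤ q := one_le_cfDen h (m+1)
  have hq'1 : 1 ≤ q' := one_le_cfDen h (m+2)
  have hpq : p ≤ q := cfDen_le_succ h m
  have hqq' : q ≤ q' := cfDen_le_succ h (m+1)
  have hx0 : 0 < x := (h.gIter (m+1)).pos
  have hx1 : x < 1 := (h.gIter (m+1)).lt_one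
  have hx'0 : 0 < x' := (h.gIter (m+2)).pos
  have hx'1 : x' < 1 := (h.gIter (m+2)).lt_one
  have hβ0 : 0 < β := betaPred_pos h (m+1)
  have hβq : β * (q + x * p) = 1 := by
    have := beta_formula h m
    linarith [this]
  have hβ'q : (β * x) * (q' + x' * q) = 1 := by
    have h1 := beta_formula h (m+1)
    have h2 : betaPred ω (m+2) = β * x := betaPred_succ ω (m+1)
    rw [h2] at h1
    linarith [h1]
  have hβlt : β < q⁻¹ := beta_lt_inv_cfDen h m
  have hβxlt : β * x < q'⁻¹ := by
    have := beta_lt_inv_cfDen h (m+1)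
    rwa [betaPred_succ ω (m+1)] at this
  -- (q' + x'q) x = q + x p
  have hA0 : (0:ℝ) < q' + x' * q := by nlinarith
  have hB0 : (0:ℝ) < q + x * p := by nlinarith
  have hc : (q' + x' * q) * x = q + x * p := by
    apply mul_left_cancel₀ hβ0.ne'
    linear_combination hβ'q - hβq
  have hlogx : Real.log (q + x * p) = Real.log (q' + x' * q) + Real.log x := by
    rw [← hc, Real.log_mul hA0.ne' hx0.ne']
  have hTB : TB ω (m+1) = β * (Real.log (q' + x' * q) - Real.log (q + x * p)) := by
    rw [TB, Real.log_inv]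
    rw [← hβ_def, ← hx_def]
    linear_combination β * hlogx
  have hTA : TA ω (m+1) = Real.log q' / q := rfl
  -- logarithm bounds
  have n1 : Real.log q' ≤ Real.log (q' + x' * q) :=
    Real.log_le_log (by linarith) (by nlinarith)
  have n2 : Real.log (q' + x' * q) ≤ Real.log 2 + Real.log q' := by
    rw [← Real.log_mul (by norm_num) (by linarith)]
    exact Real.log_le_log (by positivity) (by nlinarith)
  have n3 : 0 ≤ Real.log (q + x * p) := Real.log_nonneg (by nlinarith)
  have n4 : Real.log (q + x * p) ≤ Real.log 2 + Real.log q := by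
    rw [← Real.log_mul (by norm_num) (by linarith)]
    exact Real.log_le_log (by linarith) (by nlinarith)
  have n5 : 0 ≤ Real.log q := Real.log_nonneg hq1
  have n5' : 0 ≤ Real.log q' := Real.log_nonneg hq'1
  -- β vs 1/q
  have n8 : q⁻¹ - β = β * x * p * q⁻¹ := by
    have hq0 : (0:ℝ) < q := by linarith
    have hqq : q * q⁻¹ = 1 := mul_inv_cancel₀ hq0.ne'
    linear_combination (-(q⁻¹)) * hβq + β * hqq
  have n9 : q⁻¹ - β ≤ q'⁻¹ := by
    have s1 : β * x * p ≤ q'⁻¹ * p := mul_le_mul_of_nonneg_right hβxlt.le (by linarith)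
    have s2 : q'⁻¹ * p ≤ q'⁻¹ * q := mul_le_mul_of_nonneg_left hpq (by positivity)
    have s3 : β * x * p * q⁻¹ ≤ q'⁻¹ * q * q⁻¹ :=
      mul_le_mul_of_nonneg_right (s1.trans s2) (by positivity)
    have s4 : q'⁻¹ * q * q⁻¹ = q'⁻¹ := by
      field_simp
    rw [n8]
    rw [s4] at s3
    exact s3
  -- decomposition
  have edec : TB ω (m+1) - TA ω (m+1) =
      β * (Real.log (q' + x' * q) - Real.log q')
      + (β - q⁻¹) * Real.log q'
      - β * Real.log (q + x * p) := by
    rw [hTB, hTA]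
    have hq0 : (0:ℝ) < q := by linarith
    field_simp
    ring
  have b1 : |β * (Real.log (q' + x' * q) - Real.log q')| ≤ q⁻¹ * Real.log 2 := by
    rw [abs_of_nonneg (by nlinarith)]
    apply mul_le_mul hβlt.le (by linarith) (by linarith) (by positivity)
  have b2 : |(β - q⁻¹) * Real.log q'| ≤ q'⁻¹ * Real.log q' := by
    rw [abs_mul, abs_of_nonneg n5', abs_of_nonpos (by nlinarith : β - q⁻¹ ≤ 0)]
    apply mul_le_mul_of_nonneg_right _ n5'
    linarith
  have b3 : |β * Real.log (q + x * p)| ≤ q⁻¹ * (Real.log 2 + Real.log q) := by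
    rw [abs_of_nonneg (by nlinarith)]
    apply mul_le_mul hβlt.le n4 n3 (by positivity)
  have btot : |TB ω (m+1) - TA ω (m+1)| ≤
      q⁻¹ * (Real.log q + 2) + q'⁻¹ * (Real.log q' + 2) := by
    rw [edec]
    have tri : |β * (Real.log (q' + x' * q) - Real.log q')
        + (β - q⁻¹) * Real.log q'
        - β * Real.log (q + x * p)| ≤
        |β * (Real.log (q' + x' * q) - Real.log q')|
        + |(β - q⁻¹) * Real.log q'|
        + |β * Real.log (q + x * p)| := by
      calc _ ≤ |β * (Real.log (q' + x' * q) - Real.log q')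
          + (β - q⁻¹) * Real.log q'| + |β * Real.log (q + x * p)| := abs_sub _ _
        _ ≤ _ := by
          have := abs_add_le (β * (Real.log (q' + x' * q) - Real.log q'))
            ((β - q⁻¹) * Real.log q')
          linarith
    have hqinv : (0:ℝ) ≤ q⁻¹ := by positivity
    have hq'inv : (0:ℝ) ≤ q'⁻¹ := by positivity
    have hl2 := log_two_le_one
    have hl2' : 0 ≤ Real.log 2 := Real.log_nonneg (by norm_num)
    nlinarith [tri, b1, b2, b3, mul_le_mul_of_nonneg_left hl2 hqinv]
  calc |TB ω (m+1) - TA ω (m+1)|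
      ≤ q⁻¹ * (Real.log q + 2) + q'⁻¹ * (Real.log q' + 2) := btot
    _ ≤ 3 / Real.sqrt q + 3 / Real.sqrt q' := by
        have := aux_sqrt hq1
        have := aux_sqrt hq'1
        nlinarith [aux_sqrt hq1, aux_sqrt hq'1]


lemma invSqrt_le_one (h : Good ω) (j : ℕ) : (Real.sqrt (cfDen ω j))⁻¹ ≤ 1 := by
  have h1 : 1 ≤ Real.sqrt (cfDen ω j) := by
    rw [show (1:ℝ) = Real.sqrt 1 by simp]
    exact Real.sqrt_le_sqrt (one_le_cfDen h j)
  rw [inv_le_one_iff₀]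
  right
  exact h1

lemma invSqrt_nonneg (ω : ℝ) (j : ℕ) : 0 ≤ (Real.sqrt (cfDen ω j))⁻¹ := by positivity

lemma invSqrt_step (h : Good ω) (j : ℕ) :
    (Real.sqrt (cfDen ω (j+2)))⁻¹ ≤ (Real.sqrt 2)⁻¹ * (Real.sqrt (cfDen ω j))⁻¹ := by
  have h2 : 2 * cfDen ω j ≤ cfDen ω (j+2) := by
    rw [cfDen_eq h, cfDen_eq h]
    exact_mod_cast two_QN_le h j
  have hpos : 0 < Real.sqrt (2 * cfDen ω j) := Real.sqrt_pos.mpr (by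
    have := cfDen_pos h j; linarith)
  have hle : Real.sqrt (2 * cfDen ω j) ≤ Real.sqrt (cfDen ω (j+2)) :=
    Real.sqrt_le_sqrt h2
  have := one_div_le_one_div_of_le hpos hle
  rw [Real.sqrt_mul (by norm_num : (0:ℝ) ≤ 2)] at this
  rw [show (Real.sqrt 2)⁻¹ * (Real.sqrt (cfDen ω j))⁻¹
      = 1 / (Real.sqrt 2 * Real.sqrt (cfDen ω j)) by rw [one_div, mul_inv],
    show (Real.sqrt (cfDen ω (j+2)))⁻¹ = 1 / Real.sqrt (cfDen ω (j+2)) from (one_div _).symm]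
  exact this

lemma sqrtSum (h : Good ω) : ∀ K : ℕ, ∑ j ∈ Finset.range K, (Real.sqrt (cfDen ω j))⁻¹ ≤ 7 := by
  intro K
  induction K using Nat.strong_induction_on with
  | _ K ih =>
    match K with
    | 0 => simp
    | 1 =>
      simp only [Finset.sum_range_one]
      linarith [invSqrt_le_one h 0]
    | (K+2) =>
      have hsplit : ∑ j ∈ Finset.range (K+2), (Real.sqrt (cfDen ω j))⁻¹
          = (∑ j ∈ Finset.range K, (Real.sqrt (cfDen ω (j+2)))⁻¹)
            + (Real.sqrt (cfDen ω 1))⁻¹ + (Real.sqrt (cfDen ω 0))⁻¹ := by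
        rw [Finset.sum_range_succ' _ (K+1), Finset.sum_range_succ' _ K]
      have hterm : ∑ j ∈ Finset.range K, (Real.sqrt (cfDen ω (j+2)))⁻¹
          ≤ ∑ j ∈ Finset.range K, (Real.sqrt 2)⁻¹ * (Real.sqrt (cfDen ω j))⁻¹ :=
        Finset.sum_le_sum fun j _ => invSqrt_step h j
      rw [← Finset.mul_sum] at hterm
      have hIH := ih K (by omega)
      have hs2 : (0:ℝ) < Real.sqrt 2 := Real.sqrt_pos.mpr (by norm_num)
      have hsum_nonneg : 0 ≤ ∑ j ∈ Finset.range K, (Real.sqrt (cfDen ω j))⁻¹ :=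
        Finset.sum_nonneg fun j _ => invSqrt_nonneg ω j
      have h7 : (Real.sqrt 2)⁻¹ * ∑ j ∈ Finset.range K, (Real.sqrt (cfDen ω j))⁻¹
          ≤ (Real.sqrt 2)⁻¹ * 7 := by
        apply mul_le_mul_of_nonneg_left hIH (by positivity)
      have hnum : (Real.sqrt 2)⁻¹ * 7 ≤ 5 := by
        rw [inv_mul_le_iff₀ hs2]
        nlinarith [Real.sq_sqrt (show (0:ℝ) ≤ 2 by norm_num), Real.sqrt_nonneg 2]
      rw [hsplit]
      linarith [invSqrt_le_one h 0, invSqrt_le_one h 1]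

lemma total_bound (h : Good ω) (k : ℕ) :
    |∑ j ∈ Finset.range (k+1), (TB ω j - TA ω j)| ≤ 43 := by
  have habs : |∑ j ∈ Finset.range (k+1), (TB ω j - TA ω j)|
      ≤ ∑ j ∈ Finset.range (k+1), |TB ω j - TA ω j| :=
    Finset.abs_sum_le_sum_abs _ _
  have hsplit : ∑ j ∈ Finset.range (k+1), |TB ω j - TA ω j|
      = (∑ j ∈ Finset.range k, |TB ω (j+1) - TA ω (j+1)|) + |TB ω 0 - TA ω 0| := by
    rw [Finset.sum_range_succ' _ k]
  have hterm : ∑ j ∈ Finset.range k, |TB ω (j+1) - TA ω (j+1)|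
      ≤ ∑ j ∈ Finset.range k,
          (3 * (Real.sqrt (cfDen ω (j+1)))⁻¹ + 3 * (Real.sqrt (cfDen ω (j+2)))⁻¹) := by
    apply Finset.sum_le_sum
    intro j _
    have := term_bound h j
    rw [div_eq_mul_inv, div_eq_mul_inv] at this
    exact this
  have e1 : ∑ j ∈ Finset.range k, (3 * (Real.sqrt (cfDen ω (j+1)))⁻¹
        + 3 * (Real.sqrt (cfDen ω (j+2)))⁻¹)
      = 3 * (∑ j ∈ Finset.range k, (Real.sqrt (cfDen ω (j+1)))⁻¹)
        + 3 * (∑ j ∈ Finset.range k, (Real.sqrt (cfDen ω (j+2)))⁻¹) := by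
    rw [Finset.sum_add_distrib, Finset.mul_sum, Finset.mul_sum]
  have s1 : ∑ j ∈ Finset.range k, (Real.sqrt (cfDen ω (j+1)))⁻¹ ≤ 7 := by
    have h1 : ∑ j ∈ Finset.range (k+1), (Real.sqrt (cfDen ω j))⁻¹
        = (∑ j ∈ Finset.range k, (Real.sqrt (cfDen ω (j+1)))⁻¹)
          + (Real.sqrt (cfDen ω 0))⁻¹ := Finset.sum_range_succ' _ k
    have := sqrtSum h (k+1)
    rw [h1] at this
    linarith [invSqrt_nonneg ω 0]
  have s2 : ∑ j ∈ Finset.range k, (Real.sqrt (cfDen ω (j+2)))⁻¹ ≤ 7 := by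
    have h1 : ∑ j ∈ Finset.range (k+2), (Real.sqrt (cfDen ω j))⁻¹
        = (∑ j ∈ Finset.range k, (Real.sqrt (cfDen ω (j+2)))⁻¹)
          + (Real.sqrt (cfDen ω 1))⁻¹ + (Real.sqrt (cfDen ω 0))⁻¹ := by
      rw [Finset.sum_range_succ' _ (k+1), Finset.sum_range_succ' _ k]
    have := sqrtSum h (k+2)
    rw [h1] at this
    linarith [invSqrt_nonneg ω 0, invSqrt_nonneg ω 1]
  have h0 := term_zero h
  linarith


lemma abs_log_beta (h : Good ω) (k : ℕ) :
    |Real.log (betaPred ω k) + Real.log (cfDen ω k)| ≤ 1 := by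
  have hb := betaPred_pos h k
  have hq := cfDen_pos h k
  have hm : Real.log (betaPred ω k) + Real.log (cfDen ω k)
      = Real.log (betaPred ω k * cfDen ω k) := (Real.log_mul hb.ne' hq.ne').symm
  have hle := beta_mul_le_one h k
  have hgt := half_lt_beta_mul h k
  have hup : Real.log (betaPred ω k * cfDen ω k) ≤ 0 :=
    Real.log_nonpos (by positivity) hle
  have hlo : -Real.log 2 ≤ Real.log (betaPred ω k * cfDen ω k) := by
    have := Real.log_le_log (show (0:ℝ) < 2⁻¹ by norm_num)
      (show (2:ℝ)⁻¹ ≤ betaPred ω k * cfDen ω k by linarith)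
    rwa [Real.log_inv] at this
  rw [hm, abs_le]
  exact ⟨by linarith [log_two_le_one], by linarith⟩

lemma bddAbove_S (h : Good ω) (n : ℕ) : BddAbove {k : ℕ | cfDen ω k ≤ (n:ℝ)} := by
  refine ⟨2*n, fun k hk => ?_⟩
  have h1 : (QN ω k : ℝ) ≤ (n : ℝ) := by rw [← cfDen_eq h]; exact hk
  have h2 : QN ω k ≤ n := by exact_mod_cast h1
  have h3 := le_two_QN h k
  omega

lemma kOf_mem (h : Good ω) {n : ℕ} (hn : 1 ≤ n) :
    cfDen ω (kOf ω n) ≤ (n:ℝ) ∧ (n:ℝ) < cfDen ω (kOf ω n + 1) := by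
  have h0S : 0 ∈ {k : ℕ | cfDen ω k ≤ (n:ℝ)} := by
    show cfDen ω 0 ≤ (n:ℝ)
    show (1:ℝ) ≤ (n:ℝ)
    exact_mod_cast hn
  have hmem := Nat.sSup_mem ⟨0, h0S⟩ (bddAbove_S h n)
  refine ⟨hmem, ?_⟩
  by_contra hcon
  push_neg at hcon
  have : kOf ω n + 1 ≤ kOf ω n :=
    le_csSup (bddAbove_S h n) (hcon : cfDen ω (kOf ω n + 1) ≤ (n:ℝ))
  omega

lemma kOf_ge (h : Good ω) {K n : ℕ} (hKn : QN ω K ≤ n) : K ≤ kOf ω n := by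
  apply le_csSup (bddAbove_S h n)
  show cfDen ω K ≤ (n:ℝ)
  rw [cfDen_eq h]
  exact_mod_cast hKn

lemma kOf_QN (h : Good ω) {k : ℕ} (hk : 1 ≤ k) : kOf ω (QN ω k) = k := by
  have hub : ∀ m ∈ {m : ℕ | cfDen ω m ≤ ((QN ω k : ℕ):ℝ)}, m ≤ k := by
    intro m hm
    by_contra hcon
    push_neg at hcon
    have hm1 : k + 1 ≤ m := hcon
    have hlt : cfDen ω k < cfDen ω (k+1) := by
      obtain ⟨j, rfl⟩ := Nat.exists_eq_succ_of_ne_zero (show k ≠ 0 by omega)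
      rw [cfDen_eq h, cfDen_eq h]
      exact_mod_cast QN_succ_lt h j
    have hmono : cfDen ω (k+1) ≤ cfDen ω m := cfDen_mono h hm1
    have : cfDen ω m ≤ (QN ω k : ℝ) := hm
    rw [cfDen_eq h k] at hlt
    linarith
  apply le_antisymm
  · exact csSup_le ⟨k, by simp [Set.mem_setOf_eq, cfDen_eq h k]⟩ hub
  · exact kOf_ge h le_rfl


lemma sumAB (h : Good ω) (k : ℕ) :
    |(∑ j ∈ Finset.range (k+1), TB ω j) - (∑ j ∈ Finset.range (k+1), TA ω j)| ≤ 43 := by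
  rw [← Finset.sum_sub_distrib]
  exact total_bound h k

lemma cmp1 (h : Good ω) {s : ℝ} (hs : 0 ≤ s) (k : ℕ) :
    (∑ j ∈ Finset.range (k+1), TB ω j) + s * Real.log (betaPred ω k) ≤
      (∑ j ∈ Finset.range (k+1), TA ω j) - s * Real.log (cfDen ω k) + (43 + s) := by
  have h1 := abs_log_beta h k
  rw [abs_le] at h1
  have h2 : Real.log (betaPred ω k) ≤ -Real.log (cfDen ω k) + 1 := by linarith [h1.2]
  have h3 := mul_le_mul_of_nonneg_left h2 hs
  have h4 := sumAB h k
  rw [abs_le] at h4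
  nlinarith [h4.2]

lemma cmp2 (h : Good ω) {s : ℝ} (hs : 0 ≤ s) (k : ℕ) :
    (∑ j ∈ Finset.range (k+1), TA ω j) - s * Real.log (cfDen ω k) ≤
      (∑ j ∈ Finset.range (k+1), TB ω j) + s * Real.log (betaPred ω k) + (43 + s) := by
  have h1 := abs_log_beta h k
  rw [abs_le] at h1
  have h2 : -Real.log (cfDen ω k) ≤ Real.log (betaPred ω k) + 1 := by linarith [h1.1]
  have h3 := mul_le_mul_of_nonneg_left h2 hs
  have h4 := sumAB h k
  rw [abs_le] at h4
  nlinarith [h4.1]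

lemma main (h : Good ω) {s : ℝ} (hs : 0 ≤ s) : BrunoQ s ω ↔ BrunoB s ω := by
  constructor
  · rintro ⟨M, hM⟩
    rw [Filter.eventually_map, Filter.eventually_atTop] at hM
    obtain ⟨N, hN⟩ := hM
    refine ⟨M + 43 + s, ?_⟩
    rw [Filter.eventually_map, Filter.eventually_atTop]
    refine ⟨2*N + 1, fun k hk => ?_⟩
    have hk1 : 1 ≤ k := by omega
    have hQN : N ≤ QN ω k := by
      have := le_two_QN h k
      omega
    have hF := hN (QN ω k) hQN
    rw [kOf_QN h hk1, ← cfDen_eq h k] at hF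
    show (∑ j ∈ Finset.range (k+1), TB ω j) + s * Real.log (betaPred ω k) ≤ M + 43 + s
    have hc := cmp1 h hs k
    have hF' : (∑ j ∈ Finset.range (k+1), TA ω j) - s * Real.log (cfDen ω k) ≤ M := hF
    linarith
  · rintro ⟨M, hM⟩
    rw [Filter.eventually_map, Filter.eventually_atTop] at hM
    obtain ⟨K, hK⟩ := hM
    refine ⟨M + 43 + s, ?_⟩
    rw [Filter.eventually_map, Filter.eventually_atTop]
    refine ⟨max (QN ω K) 1, fun n hn => ?_⟩
    have hn1 : 1 ≤ n := le_trans (le_max_right _ _) hn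
    have hQ : QN ω K ≤ n := le_trans (le_max_left _ _) hn
    have hkof := kOf_mem h hn1
    have hge : K ≤ kOf ω n := kOf_ge h hQ
    have hB := hK (kOf ω n) hge
    show (∑ j ∈ Finset.range (kOf ω n + 1), TA ω j) - s * Real.log n ≤ M + 43 + s
    have hB' : (∑ j ∈ Finset.range (kOf ω n + 1), TB ω j)
        + s * Real.log (betaPred ω (kOf ω n)) ≤ M := hB
    have hlog : Real.log (cfDen ω (kOf ω n)) ≤ Real.log n :=
      Real.log_le_log (cfDen_pos h _) hkof.1
    have hlog' := mul_le_mul_of_nonneg_left hlog hs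
    have hc := cmp2 h hs (kOf ω n)
    linarith

end Bruno8

/-- Equivalence of the two forms of the Bruno-`s` condition. -/
theorem stmt8 (s ω : ℝ) (hs : 0 ≤ s) (hω : Irrational ω) (h0 : 0 < ω) (h1 : ω < 1) :
    BrunoQ s ω ↔ BrunoB s ω := by
  exact Bruno8.main ⟨h0, h1, hω⟩ hs
end

section
/- Let s > 0 and let ω ∈ (0,1) be irrational with convergent denominators (q_k) satisfying the condition lim_{k→∞} (∑_{l=0}^k (log q_{l+1})/q_l − s·log q_k) < +∞ (condition B̃_s). If ω is not a Bruno number (i.e. ∑_{l} (log q_{l+1})/q_l = +∞), then lim_{k→∞} (log q_{k+1})/(q_k·log q_k) = s. -/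
lemma gIter_mem {ω : ℝ} (hω : Irrational ω) (h0 : 0 < ω) (h1 : ω < 1) (n : ℕ) :
    Irrational (gIter ω n) ∧ 0 < gIter ω n ∧ gIter ω n < 1 := by
  induction n with
  | zero => exact ⟨hω, h0, h1⟩
  | succ n ih =>
    obtain ⟨hi, hp, hl⟩ := ih
    have hstep : gIter ω (n+1) = gaussMap (gIter ω n) := by
      simp [gIter, Function.iterate_succ_apply']
    have hinv : Irrational (gIter ω n)⁻¹ := hi.inv
    have hfr : Irrational (Int.fract (gIter ω n)⁻¹) := by
      rw [Int.fract]
      exact hinv.sub_intCast _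
    have hne : Int.fract (gIter ω n)⁻¹ ≠ 0 := by
      intro h
      exact hfr.ne_rat 0 (by simpa using h)
    refine ⟨by rwa [hstep], ?_, ?_⟩
    · rw [hstep, gaussMap]
      exact lt_of_le_of_ne (Int.fract_nonneg _) (Ne.symm hne)
    · rw [hstep, gaussMap]
      exact Int.fract_lt_one _

lemma one_le_inv_floor {x : ℝ} (h0 : 0 < x) (h1 : x < 1) : (1:ℝ) ≤ (⌊x⁻¹⌋ : ℝ) := by
  have : (1:ℝ) ≤ x⁻¹ := one_le_inv₀ h0 |>.2 h1.le
  exact_mod_cast Int.le_floor.2 (by exact_mod_cast this)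

lemma one_le_cfDen {ω : ℝ} (hω : Irrational ω) (h0 : 0 < ω) (h1 : ω < 1) (k : ℕ) :
    1 ≤ cfDen ω k := by
  induction k using Nat.twoStepInduction with
  | zero => simp [cfDen]
  | one =>
    show (1:ℝ) ≤ (⌊ω⁻¹⌋ : ℝ)
    exact one_le_inv_floor h0 h1
  | more k ih1 ih2 =>
    show (1:ℝ) ≤ (⌊(gIter ω (k+1))⁻¹⌋ : ℝ) * cfDen ω (k+1) + cfDen ω k
    obtain ⟨_, hp, hl⟩ := gIter_mem hω h0 h1 (k+1)
    nlinarith [one_le_inv_floor hp hl]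

lemma cfDen_add_le {ω : ℝ} (hω : Irrational ω) (h0 : 0 < ω) (h1 : ω < 1) (k : ℕ) :
    cfDen ω (k+1) + cfDen ω k ≤ cfDen ω (k+2) := by
  show _ ≤ (⌊(gIter ω (k+1))⁻¹⌋ : ℝ) * cfDen ω (k+1) + cfDen ω k
  obtain ⟨_, hp, hl⟩ := gIter_mem hω h0 h1 (k+1)
  nlinarith [one_le_inv_floor hp hl, one_le_cfDen hω h0 h1 (k+1)]

lemma cfDen_mono_s11 {ω : ℝ} (hω : Irrational ω) (h0 : 0 < ω) (h1 : ω < 1) (k : ℕ) :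
    cfDen ω k ≤ cfDen ω (k+1) := by
  cases k with
  | zero =>
    show (1:ℝ) ≤ (⌊ω⁻¹⌋ : ℝ)
    exact one_le_inv_floor h0 h1
  | succ k =>
    have h := cfDen_add_le hω h0 h1 k
    have h2 := one_le_cfDen hω h0 h1 k
    linarith

lemma cfDen_mono' {ω : ℝ} (hω : Irrational ω) (h0 : 0 < ω) (h1 : ω < 1) :
    Monotone (cfDen ω) :=
  monotone_nat_of_le_succ (cfDen_mono_s11 hω h0 h1)

lemma two_cfDen_le {ω : ℝ} (hω : Irrational ω) (h0 : 0 < ω) (h1 : ω < 1) (k : ℕ) :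
    2 * cfDen ω k ≤ cfDen ω (k+2) := by
  have h := cfDen_add_le hω h0 h1 k
  have h2 := cfDen_mono_s11 hω h0 h1 k
  linarith

lemma sqrt_two_pow_le {ω : ℝ} (hω : Irrational ω) (h0 : 0 < ω) (h1 : ω < 1) (k : ℕ) :
    Real.sqrt 2 ^ k ≤ 2 * cfDen ω k := by
  induction k using Nat.twoStepInduction with
  | zero => norm_num [cfDen]
  | one =>
    have h2 : Real.sqrt 2 ≤ 2 := by
      nlinarith [Real.sq_sqrt (by norm_num : (2:ℝ) ≥ 0), Real.sqrt_nonneg 2]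
    have := one_le_cfDen hω h0 h1 1
    calc Real.sqrt 2 ^ 1 = Real.sqrt 2 := pow_one _
      _ ≤ 2 := h2
      _ ≤ 2 * cfDen ω 1 := by linarith
  | more k ih1 ih2 =>
    have hsq : Real.sqrt 2 ^ (k+2) = 2 * Real.sqrt 2 ^ k := by
      rw [pow_succ, pow_succ, mul_assoc]
      rw [Real.mul_self_sqrt (by norm_num : (2:ℝ) ≥ 0)]; ring
    rw [hsq]
    have := two_cfDen_le hω h0 h1 k
    linarith

/-- Condition `B̃_s` with divergent Bruno series: if
`∑_{l=0}^k (log q_{l+1})/q_l − s log q_k` converges to a finite limit and `ω` is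
not a Bruno number, then `(log q_{k+1})/(q_k log q_k) → s`. -/
theorem stmt11 (s ω : ℝ) (hs : 0 < s) (hω : Irrational ω) (h0 : 0 < ω) (h1 : ω < 1)
    (hBt : ∃ L : ℝ, Filter.Tendsto (fun k : ℕ =>
        (∑ l ∈ Finset.range (k + 1), Real.log (cfDen ω (l + 1)) / cfDen ω l)
          - s * Real.log (cfDen ω k)) Filter.atTop (nhds L))
    (hnotB : ¬ Summable (fun l : ℕ => Real.log (cfDen ω (l + 1)) / cfDen ω l)) :
    Filter.Tendsto (fun k : ℕ =>
        Real.log (cfDen ω (k + 1)) / (cfDen ω k * Real.log (cfDen ω k)))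
      Filter.atTop (nhds s) := by
  obtain ⟨L, hb⟩ := hBt
  set q : ℕ → ℝ := cfDen ω with hq
  set Lq : ℕ → ℝ := fun k => Real.log (q k) with hLq
  set a : ℕ → ℝ := fun l => Real.log (q (l+1)) / q l with ha
  set S : ℕ → ℝ := fun k => ∑ l ∈ Finset.range (k+1), a l with hS
  set b : ℕ → ℝ := fun k => S k - s * Lq k with hbdef
  -- basic positivity
  have hq1 : ∀ k, 1 ≤ q k := one_le_cfDen hω h0 h1
  have hqpos : ∀ k, 0 < q k := fun k => lt_of_lt_of_le one_pos (hq1 k)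
  have hLqnn : ∀ k, 0 ≤ Lq k := fun k => Real.log_nonneg (hq1 k)
  have hann : ∀ k, 0 ≤ a k := fun k => div_nonneg (hLqnn (k+1)) (hqpos k).le
  have hbL : Filter.Tendsto b Filter.atTop (nhds L) := hb
  -- divergence of partial sums
  have hSdiv : Filter.Tendsto S Filter.atTop Filter.atTop := by
    have h := (not_summable_iff_tendsto_nat_atTop_of_nonneg hann).1 hnotB
    exact h.comp (Filter.tendsto_add_atTop_nat 1)
  -- log q k → ∞
  have hsLq : Filter.Tendsto (fun k => s * Lq k) Filter.atTop Filter.atTop := by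
    have : Filter.Tendsto (fun k => -b k + S k) Filter.atTop Filter.atTop :=
      Filter.Tendsto.add_atTop (hbL.neg) hSdiv
    refine this.congr (fun k => ?_)
    simp only [hbdef]; ring
  have hLqtop : Filter.Tendsto Lq Filter.atTop Filter.atTop := by
    have := hsLq.const_mul_atTop (show (0:ℝ) < s⁻¹ by positivity)
    refine this.congr (fun k => ?_)
    field_simp
  have hqtop : Filter.Tendsto q Filter.atTop Filter.atTop := by
    have := Real.tendsto_exp_atTop.comp hLqtop
    refine this.congr (fun k => ?_)
    exact Real.exp_log (hqpos k)
  -- the error term e k := b (k+1) - b k → 0, with a (k+1) = s Lq (k+1) - s Lq k + e k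
  set e : ℕ → ℝ := fun k => b (k+1) - b k with he
  have he0 : Filter.Tendsto e Filter.atTop (nhds 0) := by
    have := (hbL.comp (Filter.tendsto_add_atTop_nat 1)).sub hbL
    simpa using this
  have hae : ∀ k, a (k+1) = s * Lq (k+1) - s * Lq k + e k := by
    intro k
    have hSs : S (k+1) - S k = a (k+1) := by
      simp [hS, Finset.sum_range_succ]
    simp only [he, hbdef]
    linarith
  -- main estimate
  rw [Metric.tendsto_atTop]
  intro ε hε
  -- constants
  set δ : ℝ := min (ε/4) (s/12) with hδdef
  have hδpos : 0 < δ := lt_min (by positivity) (by positivity)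
  have hδε : δ ≤ ε/4 := min_le_left _ _
  have hδs : δ ≤ s/12 := min_le_right _ _
  set η : ℝ := min (ε/(2*s)) (5/6) with hηdef
  have hηpos : 0 < η := lt_min (by positivity) (by norm_num)
  have hη56 : η ≤ 5/6 := min_le_right _ _
  have hηε : η ≤ ε/(2*s) := min_le_left _ _
  obtain ⟨K1, hK1⟩ := Metric.tendsto_atTop.1 he0 δ hδpos
  have hK1' : ∀ k, K1 ≤ k → |e k| < δ := by
    intro k hk
    have := hK1 k hk
    rwa [Real.dist_eq, sub_zero] at this
  obtain ⟨K2, hK2⟩ := Filter.eventually_atTop.1 (hLqtop.eventually_ge_atTop 1)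
  obtain ⟨K3, hK3⟩ := Filter.eventually_atTop.1 (hqtop.eventually_ge_atTop (12/(s*η) + 1))
  set K : ℕ := max (max K1 K2) K3 with hKdef
  have hKK1 : K1 ≤ K := le_trans (le_max_left _ _) (le_max_left _ _)
  have hKK2 : K2 ≤ K := le_trans (le_max_right _ _) (le_max_left _ _)
  have hKK3 : K3 ≤ K := le_max_right _ _
  -- the step lemma
  have hstep : ∀ m, K ≤ m → 6 * Lq m ≤ 5 * Lq (m+1) → Lq (m+1) ≤ η * Lq (m+2) := by
    intro m hm hyp
    have hem : |e m| < δ := hK1' m (le_trans hKK1 hm)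
    have hem' : -δ < e m := (abs_lt.1 hem).1
    have hL1 : 1 ≤ Lq (m+1) := hK2 (m+1) (by omega)
    have hQ : 12/(s*η) + 1 ≤ q (m+1) := hK3 (m+1) (by omega)
    have h1 : (s/12) * Lq (m+1) ≤ a (m+1) := by
      have hrel := hae m
      nlinarith [mul_le_mul_of_nonneg_left hyp (le_of_lt hs), hLqnn m, hLqnn (m+1)]
    have h2 : q (m+1) * a (m+1) = Lq (m+2) := by
      simp only [ha, hLq]
      exact mul_div_cancel₀ _ (ne_of_gt (hqpos (m+1)))
    have hQ' : 12/(s*η) ≤ q (m+1) := by linarith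
    have key : Lq (m+1) / η ≤ Lq (m+2) := by
      have hc1 : Lq (m+1) / η = (12/(s*η)) * ((s/12) * Lq (m+1)) := by
        field_simp
      rw [hc1, ← h2]
      calc (12/(s*η)) * ((s/12) * Lq (m+1))
          ≤ q (m+1) * ((s/12) * Lq (m+1)) := by
            apply mul_le_mul_of_nonneg_right hQ'
            positivity
        _ ≤ q (m+1) * a (m+1) :=
            mul_le_mul_of_nonneg_left h1 (hqpos (m+1)).le
    have := (div_le_iff₀ hηpos).1 key
    linarith
  -- existence of a starting index
  have hex : ∃ m, K ≤ m ∧ 6 * Lq m ≤ 5 * Lq (m+1) := by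
    by_contra hcon
    push_neg at hcon
    have hgeo : ∀ j : ℕ, Lq (K+j) ≤ (6/5)^j * Lq K := by
      intro j
      induction j with
      | zero => simp
      | succ j ih =>
        have h := hcon (K+j) (Nat.le_add_right K j)
        have h65 : Lq (K+j+1) ≤ (6/5) * Lq (K+j) := by linarith
        calc Lq (K+(j+1)) = Lq (K+j+1) := rfl
          _ ≤ (6/5) * Lq (K+j) := h65
          _ ≤ (6/5) * ((6/5)^j * Lq K) := by
              apply mul_le_mul_of_nonneg_left ih
              norm_num
          _ = (6/5)^(j+1) * Lq K := by ring
    have hs2 : (0:ℝ) < Real.sqrt 2 := Real.sqrt_pos.2 (by norm_num)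
    set r : ℝ := (6/5) / Real.sqrt 2 with hrdef
    have hrpos : (0:ℝ) ≤ r := by positivity
    have hrlt : r < 1 := by
      rw [hrdef, div_lt_one hs2]
      exact (Real.lt_sqrt (by norm_num)).2 (by norm_num)
    set C : ℝ := (6/5) * Lq K * 2 / Real.sqrt 2 ^ K with hCdef
    have hbound : ∀ j, a (K+j) ≤ C * r^j := by
      intro j
      have hA : Lq (K+(j+1)) ≤ (6/5)^(j+1) * Lq K := hgeo (j+1)
      have hB : Real.sqrt 2 ^ (K+j) / 2 ≤ q (K+j) := by
        have := sqrt_two_pow_le hω h0 h1 (K+j)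
        linarith
      have hBpos : (0:ℝ) < Real.sqrt 2 ^ (K+j) / 2 := by positivity
      have hdiv : a (K+j) ≤ ((6/5)^(j+1) * Lq K) / (Real.sqrt 2 ^ (K+j) / 2) := by
        simp only [ha]
        exact div_le_div₀ (mul_nonneg (by positivity) (hLqnn K)) hA hBpos hB
      refine hdiv.trans (le_of_eq ?_)
      rw [hCdef, hrdef, pow_add, pow_succ]
      have hne : Real.sqrt 2 ^ K ≠ 0 := by positivity
      have hne2 : Real.sqrt 2 ^ j ≠ 0 := by positivity
      field_simp
      have h3 : Real.sqrt 2 ^ j * (Real.sqrt 2)⁻¹ ^ j = 1 := by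
        rw [← mul_pow, mul_inv_cancel₀ hs2.ne', one_pow]
      linear_combination (-(Lq K * Real.sqrt 2 ^ K * (6/5:ℝ)^j)) * h3
    have hsum : Summable (fun j => a (K+j)) :=
      Summable.of_nonneg_of_le (fun j => hann _) hbound
        ((summable_geometric_of_lt_one hrpos hrlt).mul_left C)
    have hsum' : Summable (fun j => a (j+K)) := by
      refine hsum.congr (fun j => ?_)
      rw [Nat.add_comm]
    exact hnotB ((summable_nat_add_iff K).1 hsum')
  obtain ⟨k0, hk0K, hk0⟩ := hex
  -- the invariant propagates
  have hinv : ∀ m, k0 ≤ m → 6 * Lq m ≤ 5 * Lq (m+1) := by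
    intro m hm
    induction m, hm using Nat.le_induction with
    | base => exact hk0
    | succ m hm ih =>
      have h := hstep m (le_trans hk0K hm) ih
      nlinarith [hLqnn (m+2), hηpos]
  -- final estimate
  refine ⟨k0 + 2, fun k hk => ?_⟩
  obtain ⟨m, rfl⟩ : ∃ m, k = m + 2 := ⟨k - 2, by omega⟩
  have hm0 : k0 ≤ m := by omega
  have hKm : K ≤ m := le_trans hk0K hm0
  have hsmall : Lq (m+1) ≤ η * Lq (m+2) := hstep m hKm (hinv m hm0)
  have hL1 : 1 ≤ Lq (m+2) := hK2 (m+2) (by omega)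
  have hLpos : (0:ℝ) < Lq (m+2) := lt_of_lt_of_le one_pos hL1
  have hem : |e (m+1)| < δ := hK1' (m+1) (by omega)
  have hem' := abs_lt.1 hem
  have ham : a (m+2) = s * Lq (m+2) - s * Lq (m+1) + e (m+1) := hae (m+1)
  have hXeq : Real.log (q (m+2+1)) / (q (m+2) * Real.log (q (m+2)))
      = a (m+2) / Lq (m+2) := by
    simp only [ha, hLq]
    rw [div_div]
  rw [Real.dist_eq, hXeq]
  have hkey : a (m+2) / Lq (m+2) - s = (e (m+1) - s * Lq (m+1)) / Lq (m+2) := by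
    rw [ham]
    field_simp
    ring
  rw [hkey]
  have hsLη : s * Lq (m+1) ≤ s * (η * Lq (m+2)) :=
    mul_le_mul_of_nonneg_left hsmall hs.le
  have hnum : |e (m+1) - s * Lq (m+1)| ≤ δ + s * η * Lq (m+2) := by
    have hassoc : s * (η * Lq (m+2)) = s * η * Lq (m+2) := by ring
    have hnn1 : 0 ≤ s * Lq (m+1) := mul_nonneg hs.le (hLqnn (m+1))
    have hnn2 : 0 ≤ s * η * Lq (m+2) :=
      mul_nonneg (mul_nonneg hs.le hηpos.le) hLpos.le
    rw [abs_le]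
    constructor
    · linarith
    · linarith
  have habs : |(e (m+1) - s * Lq (m+1)) / Lq (m+2)|
      = |e (m+1) - s * Lq (m+1)| / Lq (m+2) := by
    rw [abs_div, abs_of_pos hLpos]
  rw [habs]
  have hfin : |e (m+1) - s * Lq (m+1)| / Lq (m+2) ≤ (δ + s * η * Lq (m+2)) / Lq (m+2) :=
    (div_le_div_iff_of_pos_right hLpos).2 hnum
  have heq2 : (δ + s * η * Lq (m+2)) / Lq (m+2) = δ / Lq (m+2) + s * η := by
    field_simp
  have hδdiv : δ / Lq (m+2) ≤ δ := div_le_self hδpos.le hL1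
  have hsη : s * η ≤ ε/2 := by
    have := mul_le_mul_of_nonneg_left hηε hs.le
    calc s * η ≤ s * (ε/(2*s)) := this
      _ = ε/2 := by field_simp
  calc |e (m+1) - s * Lq (m+1)| / Lq (m+2) ≤ (δ + s * η * Lq (m+2)) / Lq (m+2) := hfin
    _ = δ / Lq (m+2) + s * η := heq2
    _ ≤ δ + ε/2 := by linarith
    _ ≤ ε/4 + ε/2 := by linarith
    _ < ε := by linarith
end

section
/- Let F : ℂⁿ → ℂⁿ be analytic on the unit polydisk with F(0) = 0, let H_N(z) = ∑_{1 ≤ |α| ≤ N} h_α z^α be a vector polynomial whose coefficients satisfy the Gevrey bound |h_α| ≤ A₁·B₁^{-s|α|}·(|α|!)^s, and let A be an n×n matrix. Define R_N(z) = DH_N(z)·F(z) − A·H_N(z). Then for every 0 < r < 1 there exist constants A₂, B₂ > 0 (independent of N and α) such that for every multi-index α with |α| ≥ N+1, |(1/α!)·∂^α R_N(0)| ≤ A₂·r^{-|α|}·B₂^{-sN}·(N!)^s. -/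
/-- Degree `|α|` of a multi-index. -/
def mdeg {n : ℕ} (α : Fin n →₀ ℕ) : ℕ := α.sum fun _ k => k

/-- Partial derivative `∂_i` of a map `ℂⁿ → ℂⁿ`. -/
noncomputable def pd {n : ℕ} (i : Fin n) (g : (Fin n → ℂ) → (Fin n → ℂ)) :
    (Fin n → ℂ) → (Fin n → ℂ) :=
  fun z => fderiv ℂ g z (Pi.single i 1)

/-- Multi-index partial derivative `∂^α = ∂_0^{α_0} ∘ ⋯ ∘ ∂_{n-1}^{α_{n-1}}`. -/
noncomputable def mpartial {n : ℕ} (α : Fin n →₀ ℕ) (g : (Fin n → ℂ) → (Fin n → ℂ)) :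
    (Fin n → ℂ) → (Fin n → ℂ) :=
  ((List.ofFn fun i : Fin n => (pd i)^[α i]).foldr (· ∘ ·) id) g

/-- The polynomial `H_N(z) = ∑_α h_α z^α` built from finitely many coefficients. -/
noncomputable def polyOf {n : ℕ} (h : (Fin n →₀ ℕ) →₀ (Fin n → ℂ)) :
    (Fin n → ℂ) → (Fin n → ℂ) :=
  fun z => h.sum fun α c => fun i => c i * ∏ j, z j ^ α j

open Metric

section cauchy1D

variable {E : Type*} [NormedAddCommGroup E] [NormedSpace ℂ E] [CompleteSpace E]

/-- One-dimensional Cauchy estimate on iterated derivatives. -/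
lemma cauchy1D (f : ℂ → E) (c : ℂ) (ρ M : ℝ) (hρ : 0 < ρ)
    (hf : DifferentiableOn ℂ f (closedBall c ρ))
    (hM : ∀ z ∈ closedBall c ρ, ‖f z‖ ≤ M) (k : ℕ) :
    ‖iteratedDeriv k f c‖ ≤ (k.factorial : ℝ) * M * ρ⁻¹ ^ k := by
  have hM0 : 0 ≤ M := le_trans (norm_nonneg _) (hM c (mem_closedBall_self hρ.le))
  set R : NNReal := ⟨ρ, hρ.le⟩ with hR
  have hRρ : (R : ℝ) = ρ := rfl
  have hp : HasFPowerSeriesOnBall f (cauchyPowerSeries f c R) c R := by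
    refine DifferentiableOn.hasFPowerSeriesOnBall ?_ (by exact_mod_cast hρ)
    simpa [hRρ] using hf
  have h1 : iteratedDeriv k f c = k.factorial • ((cauchyPowerSeries f c R) k fun _ => (1:ℂ)) := by
    rw [iteratedDeriv_eq_iteratedFDeriv, ← hp.factorial_smul (1:ℂ) k]
  rw [h1, ← Nat.cast_smul_eq_nsmul ℝ, norm_smul]
  have h2 : ‖(cauchyPowerSeries f c R) k fun _ => (1:ℂ)‖ ≤ ‖(cauchyPowerSeries f c R) k‖ := by
    simpa using ((cauchyPowerSeries f c R) k).le_opNorm fun _ => (1:ℂ)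
  have h3 : ‖(cauchyPowerSeries f c R) k‖ ≤
      ((2 * Real.pi)⁻¹ * ∫ θ : ℝ in (0)..2 * Real.pi, ‖f (circleMap c R θ)‖) * |(R:ℝ)|⁻¹ ^ k :=
    norm_cauchyPowerSeries_le f c R k
  have hI : (∫ θ : ℝ in (0)..2 * Real.pi, ‖f (circleMap c R θ)‖) ≤ 2 * Real.pi * M := by
    have hcont : Continuous fun θ : ℝ => ‖f (circleMap c R θ)‖ := by
      refine (hf.continuousOn.comp_continuous (continuous_circleMap c R) ?_).norm
      intro θ; simpa [hRρ] using circleMap_mem_closedBall c hρ.le θ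
    calc (∫ θ : ℝ in (0)..2 * Real.pi, ‖f (circleMap c R θ)‖)
        ≤ ∫ _ : ℝ in (0)..2 * Real.pi, M := by
          refine intervalIntegral.integral_mono_on (by positivity)
            (hcont.intervalIntegrable _ _) (intervalIntegrable_const) ?_
          intro θ _
          exact hM _ (by simpa [hRρ] using circleMap_mem_closedBall c hρ.le θ)
      _ = 2 * Real.pi * M := by simp [mul_comm]
  have h4 : (2 * Real.pi)⁻¹ * (∫ θ : ℝ in (0)..2 * Real.pi, ‖f (circleMap c R θ)‖) ≤ M := by
    have h2π : (0:ℝ) < 2 * Real.pi := Real.two_pi_pos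
    calc (2 * Real.pi)⁻¹ * (∫ θ : ℝ in (0)..2 * Real.pi, ‖f (circleMap c R θ)‖)
        ≤ (2 * Real.pi)⁻¹ * (2 * Real.pi * M) := by
          exact mul_le_mul_of_nonneg_left hI (by positivity)
      _ = M := by field_simp
  have h5 : ‖(cauchyPowerSeries f c R) k‖ ≤ M * ρ⁻¹ ^ k := by
    refine h3.trans ?_
    have : |(R:ℝ)| = ρ := by rw [hRρ, abs_of_pos hρ]
    rw [this]
    exact mul_le_mul_of_nonneg_right h4 (by positivity)
  calc ‖(k.factorial : ℝ)‖ * ‖(cauchyPowerSeries f c R) k fun _ => (1:ℂ)‖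
      ≤ (k.factorial : ℝ) * (M * ρ⁻¹ ^ k) := by
        rw [Real.norm_natCast]
        exact mul_le_mul_of_nonneg_left (h2.trans h5) (by positivity)
    _ = (k.factorial : ℝ) * M * ρ⁻¹ ^ k := by ring

end cauchy1D

section slice


variable {n : ℕ}

lemma pd_analyticOnNhd {U : Set (Fin n → ℂ)} {g : (Fin n → ℂ) → (Fin n → ℂ)}
    (hg : AnalyticOnNhd ℂ g U) (i : Fin n) : AnalyticOnNhd ℂ (pd i g) U := by
  intro x hx
  have h1 : AnalyticAt ℂ (fderiv ℂ g) x := (hg x hx).fderiv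
  exact ((ContinuousLinearMap.apply ℂ (Fin n → ℂ) (Pi.single i 1)).analyticAt
    (fderiv ℂ g x)).comp h1

lemma pd_iter_analyticOnNhd {U : Set (Fin n → ℂ)} {g : (Fin n → ℂ) → (Fin n → ℂ)}
    (hg : AnalyticOnNhd ℂ g U) (i : Fin n) (k : ℕ) : AnalyticOnNhd ℂ ((pd i)^[k] g) U := by
  induction k generalizing g with
  | zero => exact hg
  | succ k ih => rw [Function.iterate_succ_apply]; exact ih (pd_analyticOnNhd hg i)

lemma pd_slice {g : (Fin n → ℂ) → (Fin n → ℂ)} {z : Fin n → ℂ} {i : Fin n} {w : ℂ}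
    (hg : DifferentiableAt ℂ g (Function.update z i w)) :
    pd i g (Function.update z i w) = deriv (fun u => g (Function.update z i u)) w := by
  have h := hg.hasFDerivAt.comp_hasDerivAt w (hasDerivAt_update z i w)
  exact (h.deriv).symm

lemma pd_iter_slice {U : Set (Fin n → ℂ)} (hU : IsOpen U) {g : (Fin n → ℂ) → (Fin n → ℂ)}
    (hg : AnalyticOnNhd ℂ g U) (i : Fin n) (k : ℕ) (z : Fin n → ℂ) (w : ℂ)
    (hw : Function.update z i w ∈ U) :
    (pd i)^[k] g (Function.update z i w)
      = iteratedDeriv k (fun u => g (Function.update z i u)) w := by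
  induction k generalizing g with
  | zero => simp
  | succ k ih =>
    rw [Function.iterate_succ_apply, iteratedDeriv_succ',
      ih (pd_analyticOnNhd hg i)]
    refine Filter.EventuallyEq.iteratedDeriv_eq k ?_
    have hcont : Continuous fun u : ℂ => Function.update z i u :=
      continuous_iff_continuousAt.2 fun u => (hasDerivAt_update z i u).differentiableAt.continuousAt
    have hV : IsOpen {u : ℂ | Function.update z i u ∈ U} := hU.preimage hcont
    filter_upwards [hV.mem_nhds hw] with u hu
    exact pd_slice ((hg _ hu).differentiableAt)

end slice

lemma mdeg_eq_sum {n : ℕ} (α : Fin n →₀ ℕ) : mdeg α = ∑ i, α i :=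
  Finsupp.sum_fintype _ _ fun _ => rfl

lemma multiCauchy {n : ℕ} (α : Fin n →₀ ℕ) (g : (Fin n → ℂ) → (Fin n → ℂ))
    {U : Set (Fin n → ℂ)} (hU : IsOpen U) (hg : AnalyticOnNhd ℂ g U)
    {ρ M : ℝ} (hρ : 0 < ρ) (hsub : {z : Fin n → ℂ | ∀ i, ‖z i‖ ≤ ρ} ⊆ U)
    (hM : ∀ z : Fin n → ℂ, (∀ i, ‖z i‖ ≤ ρ) → ‖g z‖ ≤ M) :
    ‖mpartial α g 0‖ ≤ (∏ i, ((α i).factorial : ℝ)) * ρ⁻¹ ^ (mdeg α) * M := by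
  classical
  set f : Fin n → ((Fin n → ℂ) → (Fin n → ℂ)) → ((Fin n → ℂ) → (Fin n → ℂ)) :=
    fun i => (pd i)^[α i] with hf
  set D : ℕ → ((Fin n → ℂ) → (Fin n → ℂ)) :=
    fun j => ((List.ofFn f).drop j).foldr (· ∘ ·) id g with hDdef
  have hDrec : ∀ (j : ℕ) (hj : j < n), D j = (pd ⟨j, hj⟩)^[α ⟨j, hj⟩] (D (j + 1)) := by
    intro j hj
    have hlen : j < (List.ofFn f).length := by simpa using hj
    simp only [hDdef]
    rw [List.drop_eq_getElem_cons hlen, List.foldr_cons, List.getElem_ofFn]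
    rfl
  have hDn : D n = g := by
    simp only [hDdef]
    rw [List.drop_of_length_le (by simp), List.foldr_nil]
    rfl
  have key : ∀ d j, j + d = n →
      AnalyticOnNhd ℂ (D j) U ∧
      ∀ z : Fin n → ℂ, (∀ i, ‖z i‖ ≤ ρ) → (∀ i : Fin n, j ≤ (i : ℕ) → z i = 0) →
        ‖D j z‖ ≤ (∏ i : Fin n, if j ≤ (i : ℕ) then ((α i).factorial : ℝ) else 1)
            * ρ⁻¹ ^ (∑ i : Fin n, if j ≤ (i : ℕ) then α i else 0) * M := by
    intro d
    induction d with
    | zero =>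
      intro j hj
      have hjn : j = n := by omega
      rw [hjn, hDn]
      refine ⟨hg, ?_⟩
      intro z hz _
      have h1 : (∏ i : Fin n, if n ≤ (i : ℕ) then ((α i).factorial : ℝ) else 1) = 1 :=
        Finset.prod_eq_one fun i _ => if_neg (by have := i.isLt; omega)
      have h2 : (∑ i : Fin n, if n ≤ (i : ℕ) then α i else 0) = 0 :=
        Finset.sum_eq_zero fun i _ => if_neg (by have := i.isLt; omega)
      rw [h1, h2]
      simpa using hM z hz
    | succ d ih =>
      intro j hj
      have hjn : j < n := by omega
      obtain ⟨ihA, ihB⟩ := ih (j + 1) (by omega)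
      set ii : Fin n := ⟨j, hjn⟩ with hii
      have hD : D j = (pd ii)^[α ii] (D (j + 1)) := hDrec j hjn
      have hanal : AnalyticOnNhd ℂ (D j) U := by
        rw [hD]; exact pd_iter_analyticOnNhd ihA _ _
      refine ⟨hanal, ?_⟩
      intro z hz hz0
      have hzii : z ii = 0 := hz0 ii le_rfl
      have hmem : ∀ u : ℂ, ‖u‖ ≤ ρ → Function.update z ii u ∈ U := by
        intro u hu
        refine hsub fun i => ?_
        rcases eq_or_ne i ii with rfl | hne
        · simpa [Function.update_self] using hu
        · simpa [Function.update_of_ne hne] using hz i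
      have h0 : z = Function.update z ii 0 := by
        rw [← hzii, Function.update_eq_self]
      have hslice : D j z
          = iteratedDeriv (α ii) (fun u => D (j + 1) (Function.update z ii u)) 0 := by
        rw [hD]
        conv_lhs => rw [h0]
        exact pd_iter_slice hU ihA ii (α ii) z 0 (by rw [← h0]; exact hsub hz)
      set B : ℝ := (∏ i : Fin n, if j + 1 ≤ (i : ℕ) then ((α i).factorial : ℝ) else 1)
          * ρ⁻¹ ^ (∑ i : Fin n, if j + 1 ≤ (i : ℕ) then α i else 0) * M with hB
      have hdiff : DifferentiableOn ℂ (fun u => D (j + 1) (Function.update z ii u))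
          (closedBall (0 : ℂ) ρ) := by
        intro u hu
        have humem : Function.update z ii u ∈ U := hmem u (by simpa using hu)
        exact (((ihA _ humem).differentiableAt).comp u
          (hasDerivAt_update z ii u).differentiableAt).differentiableWithinAt
      have hbd : ∀ u ∈ closedBall (0 : ℂ) ρ, ‖D (j + 1) (Function.update z ii u)‖ ≤ B := by
        intro u hu
        refine ihB _ (fun i => ?_) (fun i hi => ?_)
        · rcases eq_or_ne i ii with rfl | hne
          · simpa [Function.update_self] using hu
          · simpa [Function.update_of_ne hne] using hz i
        · have hne : i ≠ ii := by
            intro hEq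
            rw [hEq] at hi
            have hval : (ii : ℕ) = j := rfl
            omega
          rw [Function.update_of_ne hne]
          exact hz0 i (by omega)
      have hc := cauchy1D _ 0 ρ B hρ hdiff hbd (α ii)
      rw [hslice]
      refine hc.trans ?_
      have hP : (∏ i : Fin n, if j ≤ (i : ℕ) then ((α i).factorial : ℝ) else 1)
          = ((α ii).factorial : ℝ)
            * ∏ i : Fin n, if j + 1 ≤ (i : ℕ) then ((α i).factorial : ℝ) else 1 := by
        have hsplit : ∀ i : Fin n,
            (if j ≤ (i : ℕ) then ((α i).factorial : ℝ) else 1)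
              = (if i = ii then ((α i).factorial : ℝ) else 1)
                * (if j + 1 ≤ (i : ℕ) then ((α i).factorial : ℝ) else 1) := by
          intro i
          rcases eq_or_ne i ii with rfl | hne
          · simp [hii]
          · have hvne : (i : ℕ) ≠ j := fun hEq => hne (Fin.ext (by simp [hii, hEq]))
            rcases le_or_gt (j + 1) (i : ℕ) with hle | hlt
            · rw [if_pos (by omega), if_neg hne, if_pos hle, one_mul]
            · rw [if_neg (by omega), if_neg hne, if_neg (by omega), one_mul]
        rw [Finset.prod_congr rfl fun i _ => hsplit i, Finset.prod_mul_distrib,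
          Finset.prod_ite_eq' Finset.univ ii fun i => ((α i).factorial : ℝ),
          if_pos (Finset.mem_univ _)]
      have hS : (∑ i : Fin n, if j ≤ (i : ℕ) then α i else 0)
          = α ii + ∑ i : Fin n, if j + 1 ≤ (i : ℕ) then α i else 0 := by
        have hsplit : ∀ i : Fin n,
            (if j ≤ (i : ℕ) then α i else 0)
              = (if i = ii then α i else 0) + (if j + 1 ≤ (i : ℕ) then α i else 0) := by
          intro i
          rcases eq_or_ne i ii with rfl | hne
          · simp [hii]
          · have hvne : (i : ℕ) ≠ j := fun hEq => hne (Fin.ext (by simp [hii, hEq]))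
            rcases le_or_gt (j + 1) (i : ℕ) with hle | hlt
            · rw [if_pos (by omega), if_neg hne, if_pos hle, zero_add]
            · rw [if_neg (by omega), if_neg hne, if_neg (by omega), zero_add]
        rw [Finset.sum_congr rfl fun i _ => hsplit i, Finset.sum_add_distrib,
          Finset.sum_ite_eq' Finset.univ ii fun i => α i, if_pos (Finset.mem_univ _)]
      rw [hP, hS, hB, pow_add]
      ring_nf
      exact le_rfl
  obtain ⟨_, hbound⟩ := key n 0 (by omega)
  have hm : mpartial α g 0 = D 0 0 := by
    simp only [hDdef, mpartial, List.drop_zero, hf]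
  have h0z : ∀ i : Fin n, ‖(0 : Fin n → ℂ) i‖ ≤ ρ := fun i => by simp [hρ.le]
  have hone : (∏ i : Fin n, if 0 ≤ (i : ℕ) then ((α i).factorial : ℝ) else 1)
      = ∏ i, ((α i).factorial : ℝ) := Finset.prod_congr rfl fun i _ => if_pos (Nat.zero_le _)
  have htwo : (∑ i : Fin n, if 0 ≤ (i : ℕ) then α i else 0) = mdeg α := by
    rw [mdeg_eq_sum]; exact Finset.sum_congr rfl fun i _ => if_pos (Nat.zero_le _)
  have := hbound 0 h0z (fun i _ => rfl)
  rw [hone, htwo] at this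
  rw [hm]
  exact this

lemma polyOf_eq_sum {n : ℕ} (h : (Fin n →₀ ℕ) →₀ (Fin n → ℂ)) (z : Fin n → ℂ) :
    polyOf h z = ∑ β ∈ h.support, (fun i => h β i * ∏ j, z j ^ β j) := rfl

lemma polyOf_analytic {n : ℕ} (h : (Fin n →₀ ℕ) →₀ (Fin n → ℂ)) :
    AnalyticOnNhd ℂ (polyOf h) Set.univ := by
  intro x _
  have : AnalyticAt ℂ (fun z : Fin n → ℂ =>
      ∑ β ∈ h.support, (fun i => h β i * ∏ j, z j ^ β j)) x := by
    refine Finset.analyticAt_fun_sum _ fun β _ => ?_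
    refine AnalyticAt.pi fun i => ?_
    refine analyticAt_const.mul ?_
    refine Finset.analyticAt_fun_prod _ fun j _ => ?_
    exact ((ContinuousLinearMap.proj j : (Fin n → ℂ) →L[ℂ] ℂ).analyticAt x).pow _
  exact this.congr (by filter_upwards with z; rw [polyOf_eq_sum])

lemma norm_polyOf_le {n : ℕ} (h : (Fin n →₀ ℕ) →₀ (Fin n → ℂ)) (z : Fin n → ℂ)
    (hz : ∀ i, ‖z i‖ ≤ 1) : ‖polyOf h z‖ ≤ ∑ β ∈ h.support, ‖h β‖ := by
  rw [polyOf_eq_sum]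
  refine le_trans (norm_sum_le _ _) (Finset.sum_le_sum fun β _ => ?_)
  rw [pi_norm_le_iff_of_nonneg (norm_nonneg _)]
  intro i
  calc ‖h β i * ∏ j, z j ^ β j‖ = ‖h β i‖ * ‖∏ j, z j ^ β j‖ := norm_mul _ _
    _ ≤ ‖h β‖ * 1 := by
        refine mul_le_mul (norm_le_pi_norm (h β) i) ?_ (norm_nonneg _) (norm_nonneg _)
        rw [norm_prod]
        refine Finset.prod_le_one (fun j _ => norm_nonneg _) fun j _ => ?_
        rw [norm_pow]
        exact pow_le_one₀ (norm_nonneg _) (hz j)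
    _ = ‖h β‖ := mul_one _

lemma le_mdeg {n : ℕ} (β : Fin n →₀ ℕ) (i : Fin n) : β i ≤ mdeg β := by
  unfold mdeg
  by_cases hi : i ∈ β.support
  · exact Finset.single_le_sum (f := fun j => β j) (fun _ _ => Nat.zero_le _) hi
  · simp [Finsupp.notMem_support_iff.mp hi]

lemma card_support_le {n N : ℕ} (h : (Fin n →₀ ℕ) →₀ (Fin n → ℂ))
    (hsupp : ∀ β ∈ h.support, mdeg β ≤ N) : h.support.card ≤ (N + 1) ^ n := by
  classical
  have hb : ∀ β ∈ h.support, ∀ i, β i ≤ N := fun β hβ i => (le_mdeg β i).trans (hsupp β hβ)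
  have hcard := Finset.card_le_card_of_injOn (s := h.support)
    (t := (Finset.univ : Finset (Fin n → Fin (N + 1))))
    (fun (β : Fin n →₀ ℕ) => fun i => (⟨min (β i) N, by omega⟩ : Fin (N + 1)))
    (fun _ _ => Finset.mem_univ _) ?_
  · simpa [Fintype.card_fun] using hcard
  · intro β hβ γ hγ hfg
    ext i
    have hβi := hb β hβ i
    have hγi := hb γ hγ i
    have := congrFun hfg i
    simp only [Fin.mk.injEq] at this
    omega

/-- Cauchy bound on the operator norm of the derivative. -/
lemma fderiv_bound {n : ℕ} {g : (Fin n → ℂ) → (Fin n → ℂ)}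
    (hg : AnalyticOnNhd ℂ g Set.univ) {ρ₂ C δ : ℝ} (hδ : 0 < δ) (hC : 0 ≤ C)
    (hCb : ∀ y : Fin n → ℂ, (∀ i, ‖y i‖ ≤ ρ₂) → ‖g y‖ ≤ C)
    (z : Fin n → ℂ) (hz : ∀ i, ‖z i‖ ≤ ρ₂ - δ) (w : Fin n → ℂ) :
    ‖fderiv ℂ g z w‖ ≤ C * δ⁻¹ * ‖w‖ := by
  rcases eq_or_ne w 0 with rfl | hw
  · simp [map_zero]
  have hwn : (0 : ℝ) < ‖w‖ := norm_pos_iff.2 hw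
  set c : ℂ := (‖w‖ : ℂ)⁻¹ with hc
  set v : Fin n → ℂ := c • w with hv
  have hcn : ‖c‖ = ‖w‖⁻¹ := by
    rw [hc, norm_inv, Complex.norm_real, Real.norm_eq_abs, abs_of_pos hwn]
  have hvi : ∀ i, ‖v i‖ ≤ 1 := by
    intro i
    rw [hv]
    calc ‖(c • w) i‖ = ‖c‖ * ‖w i‖ := by simp [norm_smul]
      _ ≤ ‖w‖⁻¹ * ‖w‖ := by
          rw [hcn]
          exact mul_le_mul_of_nonneg_left (norm_le_pi_norm w i) (by positivity)
      _ = 1 := inv_mul_cancel₀ hwn.ne'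
  set φ : ℂ → (Fin n → ℂ) := fun u => g (z + u • v) with hφ
  have hinner : ∀ u : ℂ, HasDerivAt (fun u : ℂ => z + u • v) v u := fun u => by
    simpa using ((hasDerivAt_id u).smul_const v).const_add z
  have hφdiff : DifferentiableOn ℂ φ (closedBall (0 : ℂ) δ) := by
    intro u _
    exact (((hg _ (Set.mem_univ _)).differentiableAt).comp u
      (hinner u).differentiableAt).differentiableWithinAt
  have hφM : ∀ u ∈ closedBall (0 : ℂ) δ, ‖φ u‖ ≤ C := by
    intro u hu
    refine hCb _ fun i => ?_
    have hu' : ‖u‖ ≤ δ := by simpa using hu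
    calc ‖(z + u • v) i‖ = ‖z i + u * v i‖ := by simp
      _ ≤ ‖z i‖ + ‖u * v i‖ := norm_add_le _ _
      _ ≤ (ρ₂ - δ) + δ * 1 := by
          refine add_le_add (hz i) ?_
          rw [norm_mul]
          exact mul_le_mul hu' (hvi i) (norm_nonneg _) hδ.le
      _ = ρ₂ := by ring
  have hder : deriv φ 0 = fderiv ℂ g z v := by
    have h1 : HasDerivAt φ (fderiv ℂ g (z + (0 : ℂ) • v) v) 0 :=
      ((hg _ (Set.mem_univ _)).differentiableAt.hasFDerivAt).comp_hasDerivAt 0 (hinner 0)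
    simpa using h1.deriv
  have hcau := cauchy1D φ 0 δ C hδ hφdiff hφM 1
  rw [iteratedDeriv_one, hder] at hcau
  norm_num [Nat.factorial] at hcau
  have hfv : fderiv ℂ g z v = c • fderiv ℂ g z w := by rw [hv, map_smul]
  rw [hfv, norm_smul, hcn] at hcau
  have : ‖fderiv ℂ g z w‖ = ‖w‖ * (‖w‖⁻¹ * ‖fderiv ℂ g z w‖) := by
    field_simp
  rw [this]
  calc ‖w‖ * (‖w‖⁻¹ * ‖fderiv ℂ g z w‖) ≤ ‖w‖ * ((1 : ℝ) * C * δ⁻¹ ^ 1) :=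
        mul_le_mul_of_nonneg_left (by simpa using hcau) hwn.le
    _ = C * δ⁻¹ * ‖w‖ := by ring

/-- Polynomial growth is dominated by exponentials: `(N+1)^n ≤ C₀^n * 2^(s*N)`. -/
lemma poly_le_exp (s : ℝ) (hs : 0 < s) (n : ℕ) :
    ∃ C₀ : ℝ, 0 < C₀ ∧ ∀ N : ℕ, ((N : ℝ) + 1) ^ n ≤ C₀ ^ n * (2 : ℝ) ^ (s * N) := by
  set u : ℝ := (2 : ℝ) ^ (s / (n + 1)) with hu
  have hu1 : 1 < u := by
    rw [hu]
    exact (Real.one_lt_rpow_iff_of_pos (by norm_num)).2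
      (Or.inl ⟨by norm_num, div_pos hs (by positivity)⟩)
  set e : ℝ := u - 1 with he
  have he0 : 0 < e := by simp [he]; linarith
  refine ⟨1 + e⁻¹, by positivity, fun N => ?_⟩
  have hbern : 1 + e * N ≤ u ^ N := by
    have h := one_add_mul_le_pow (a := e) (by linarith) N
    have hue : (1 : ℝ) + e = u := by rw [he]; ring
    calc (1 : ℝ) + e * N = 1 + (N : ℝ) * e := by ring
      _ ≤ (1 + e) ^ N := h
      _ = u ^ N := by rw [hue]
  have hstep : (N : ℝ) + 1 ≤ (1 + e⁻¹) * u ^ N := by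
    calc (N : ℝ) + 1 ≤ (1 + e⁻¹) * (1 + e * N) := by
          have hinv : e⁻¹ * e = 1 := inv_mul_cancel₀ he0.ne'
          have h1 : (0:ℝ) ≤ e * N := by positivity
          have h2 : (0:ℝ) < e⁻¹ := by positivity
          nlinarith [h1, h2, hinv]
      _ ≤ (1 + e⁻¹) * u ^ N := by
          refine mul_le_mul_of_nonneg_left hbern (by positivity)
  calc ((N : ℝ) + 1) ^ n ≤ ((1 + e⁻¹) * u ^ N) ^ n := by
        refine pow_le_pow_left₀ (by positivity) hstep n
    _ = (1 + e⁻¹) ^ n * (u ^ N) ^ n := mul_pow _ _ _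
    _ ≤ (1 + e⁻¹) ^ n * (2 : ℝ) ^ (s * N) := by
        refine mul_le_mul_of_nonneg_left ?_ (by positivity)
        have h1 : (u ^ N) ^ n = u ^ (N * n) := by rw [← pow_mul]
        have h2 : u ^ (N * n) ≤ u ^ (N * (n + 1)) :=
          pow_le_pow_right₀ hu1.le (by nlinarith)
        have h3 : u ^ (N * (n + 1)) = (2 : ℝ) ^ (s * N) := by
          rw [hu, ← Real.rpow_natCast ((2:ℝ) ^ (s / (n+1))) (N * (n+1)), ← Real.rpow_mul (by norm_num)]
          congr 1
          field_simp
          push_cast; ring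
        rw [h1, ← h3]
        exact h2

/-- Cauchy-type estimate on the Taylor coefficients of the remainder
`R_N(z) = DH_N(z)·F(z) − A·H_N(z)`: for every `0 < r < 1` there are constants
`A₂, B₂ > 0` independent of `N` and `α` such that for `|α| ≥ N + 1`,
`|(1/α!) ∂^α R_N(0)| ≤ A₂ r^{-|α|} B₂^{-sN} (N!)^s`. -/
theorem stmt15 {n : ℕ} (s A₁ B₁ : ℝ) (hs : 0 < s) (hA₁ : 0 < A₁) (hB₁ : 0 < B₁)
    (F : (Fin n → ℂ) → (Fin n → ℂ))
    (hF : AnalyticOnNhd ℂ F {z | ∀ i, ‖z i‖ < 1}) (hF0 : F 0 = 0)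
    (A : Matrix (Fin n) (Fin n) ℂ)
    (r : ℝ) (hr0 : 0 < r) (hr1 : r < 1) :
    ∃ A₂ B₂ : ℝ, 0 < A₂ ∧ 0 < B₂ ∧
      ∀ N : ℕ, ∀ h : (Fin n →₀ ℕ) →₀ (Fin n → ℂ),
        (∀ α ∈ h.support, 1 ≤ mdeg α ∧ mdeg α ≤ N) →
        (∀ α : Fin n →₀ ℕ,
          ‖h α‖ ≤ A₁ * B₁ ^ (-(s * (mdeg α : ℝ))) * ((Nat.factorial (mdeg α) : ℝ)) ^ s) →
        ∀ α : Fin n →₀ ℕ, N + 1 ≤ mdeg α →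
          ‖mpartial α
              (fun z => fderiv ℂ (polyOf h) z (F z) - A.mulVec (polyOf h z)) 0‖
            ≤ ((α.prod fun _ k => Nat.factorial k : ℕ) : ℝ)
                * (A₂ * r ^ (-(mdeg α : ℝ)) * B₂ ^ (-(s * N)) * ((Nat.factorial N : ℝ)) ^ s) := by
  classical
  set ρ : ℝ := (1 + r) / 2 with hρdef
  set ρ₂ : ℝ := (3 + r) / 4 with hρ₂def
  set δ : ℝ := (1 - r) / 4 with hδdef
  have hρ0 : 0 < ρ := by rw [hρdef]; linarith
  have hrρ : r ≤ ρ := by rw [hρdef]; linarith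
  have hρ1 : ρ < 1 := by rw [hρdef]; linarith
  have hρ₂0 : 0 < ρ₂ := by rw [hρ₂def]; linarith
  have hρ₂1 : ρ₂ < 1 := by rw [hρ₂def]; linarith
  have hδ0 : 0 < δ := by rw [hδdef]; linarith
  have hρρ₂ : ρ = ρ₂ - δ := by rw [hρdef, hρ₂def, hδdef]; ring
  have hρleρ₂ : ρ ≤ ρ₂ := by rw [hρdef, hρ₂def]; linarith
  set U : Set (Fin n → ℂ) := {z | ∀ i, ‖z i‖ < 1} with hUdef
  have hUopen : IsOpen U := by
    have : U = ⋂ i, {z : Fin n → ℂ | ‖z i‖ < 1} := by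
      ext z; simp [hUdef, Set.mem_iInter]
    rw [this]
    exact isOpen_iInter_of_finite fun i =>
      isOpen_lt ((continuous_apply i).norm) continuous_const
  -- bound for F on the closed polydisk of radius ρ₂
  have hKU : closedBall (0 : Fin n → ℂ) ρ₂ ⊆ U := by
    intro z hz i
    have h1 : ‖z‖ ≤ ρ₂ := mem_closedBall_zero_iff.1 hz
    exact lt_of_le_of_lt ((norm_le_pi_norm z i).trans h1) hρ₂1
  obtain ⟨MF, hMF⟩ := (isCompact_closedBall (0 : Fin n → ℂ) ρ₂).exists_bound_of_continuousOn
    (fun x hx => ((hF x (hKU hx)).continuousAt).continuousWithinAt)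
  have hMF0 : 0 ≤ MF :=
    le_trans (norm_nonneg _) (hMF 0 (mem_closedBall_self hρ₂0.le))
  -- the matrix as a continuous linear map
  set L : (Fin n → ℂ) →L[ℂ] (Fin n → ℂ) :=
    LinearMap.toContinuousLinearMap (Matrix.mulVecLin A) with hLdef
  have hLev : ∀ x, L x = A.mulVec x := fun x => by
    simp [hLdef, Matrix.mulVecLin_apply]
  set CA : ℝ := ‖L‖ with hCAdef
  have hCA0 : 0 ≤ CA := norm_nonneg _
  obtain ⟨C₀, hC₀, hC₀b⟩ := poly_le_exp s hs n
  set a : ℝ := min B₁ 1 with hadef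
  have ha0 : 0 < a := lt_min hB₁ one_pos
  have ha1 : a ≤ 1 := min_le_right _ _
  have haB : a ≤ B₁ := min_le_left _ _
  refine ⟨C₀ ^ n * ((MF / δ + CA + 1) * A₁), a / 2, ?_, by positivity, ?_⟩
  · have h1 : (0:ℝ) < MF / δ + CA + 1 := by positivity
    positivity
  intro N h hsupp hgev α hα
  set B₂ : ℝ := a / 2 with hB₂def
  set A₂ : ℝ := C₀ ^ n * ((MF / δ + CA + 1) * A₁) with hA₂def
  set Q : ℝ := A₁ * a ^ (-(s * (N : ℝ))) * ((N.factorial : ℝ)) ^ s with hQdef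
  have hQ0 : 0 ≤ Q := by
    have : (0:ℝ) < (N.factorial : ℝ) := by exact_mod_cast N.factorial_pos
    positivity
  set CN : ℝ := ((N : ℝ) + 1) ^ n * Q with hCNdef
  have hCN0 : 0 ≤ CN := by positivity
  -- coefficient bound
  have hcoeff : ∀ β ∈ h.support, ‖h β‖ ≤ Q := by
    intro β hβ
    have hd : mdeg β ≤ N := (hsupp β hβ).2
    refine (hgev β).trans ?_
    have h1 : B₁ ^ (-(s * (mdeg β : ℝ))) ≤ a ^ (-(s * (mdeg β : ℝ))) :=
      Real.rpow_le_rpow_of_nonpos ha0 haB (by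
        have : (0:ℝ) ≤ s * (mdeg β : ℝ) := by positivity
        linarith)
    have h2 : a ^ (-(s * (mdeg β : ℝ))) ≤ a ^ (-(s * (N : ℝ))) := by
      refine Real.rpow_le_rpow_of_exponent_ge ha0 ha1 ?_
      have : s * (mdeg β : ℝ) ≤ s * (N : ℝ) :=
        mul_le_mul_of_nonneg_left (by exact_mod_cast hd) hs.le
      linarith
    have h3 : ((mdeg β).factorial : ℝ) ^ s ≤ ((N.factorial : ℝ)) ^ s :=
      Real.rpow_le_rpow (by positivity) (by exact_mod_cast Nat.factorial_le hd) hs.le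
    rw [hQdef]
    refine mul_le_mul (mul_le_mul le_rfl (h1.trans h2) (by positivity) hA₁.le) h3
      (by positivity) (by positivity)
  -- sup bound for the polynomial on the polydisk of radius ρ₂
  have hpoly : ∀ z : Fin n → ℂ, (∀ i, ‖z i‖ ≤ ρ₂) → ‖polyOf h z‖ ≤ CN := by
    intro z hz
    refine (norm_polyOf_le h z fun i => (hz i).trans hρ₂1.le).trans ?_
    calc (∑ β ∈ h.support, ‖h β‖) ≤ h.support.card • Q :=
        Finset.sum_le_card_nsmul _ _ _ fun β hβ => hcoeff β hβ
      _ = (h.support.card : ℝ) * Q := nsmul_eq_mul _ _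
      _ ≤ ((N : ℝ) + 1) ^ n * Q := by
          refine mul_le_mul_of_nonneg_right ?_ hQ0
          have := card_support_le h fun β hβ => (hsupp β hβ).2
          calc (h.support.card : ℝ) ≤ (((N + 1) ^ n : ℕ) : ℝ) := by exact_mod_cast this
            _ = ((N : ℝ) + 1) ^ n := by push_cast; ring
  -- derivative bound
  have hfd : ∀ z : Fin n → ℂ, (∀ i, ‖z i‖ ≤ ρ) → ∀ w : Fin n → ℂ,
      ‖fderiv ℂ (polyOf h) z w‖ ≤ CN * δ⁻¹ * ‖w‖ := by
    intro z hz w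
    exact fderiv_bound (polyOf_analytic h) hδ0 hCN0 hpoly z
      (fun i => by rw [← hρρ₂]; exact hz i) w
  -- the remainder function
  set Rf : (Fin n → ℂ) → (Fin n → ℂ) :=
    fun z => fderiv ℂ (polyOf h) z (F z) - A.mulVec (polyOf h z) with hRfdef
  have hRanal : AnalyticOnNhd ℂ Rf U := by
    intro x hx
    have h1 : AnalyticAt ℂ (fun z => fderiv ℂ (polyOf h) z (F z)) x := by
      have hb := (ContinuousLinearMap.apply ℂ (Fin n → ℂ) :
        (Fin n → ℂ) →L[ℂ] ((Fin n → ℂ) →L[ℂ] (Fin n → ℂ)) →L[ℂ] (Fin n → ℂ)).analyticAt_bilinear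
        (F x, fderiv ℂ (polyOf h) x)
      exact hb.comp₂ (hF x hx) ((polyOf_analytic h).fderiv x (Set.mem_univ x))
    have h2 : AnalyticAt ℂ (fun z => A.mulVec (polyOf h z)) x := by
      have h3 : AnalyticAt ℂ (fun z => L (polyOf h z)) x :=
        (L.analyticAt _).comp (polyOf_analytic h x (Set.mem_univ x))
      simpa only [hLev] using h3
    exact h1.sub h2
  set MR : ℝ := CN * δ⁻¹ * MF + CA * CN with hMRdef
  have hRbd : ∀ z : Fin n → ℂ, (∀ i, ‖z i‖ ≤ ρ) → ‖Rf z‖ ≤ MR := by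
    intro z hz
    have hzB : z ∈ closedBall (0 : Fin n → ℂ) ρ₂ := by
      rw [mem_closedBall_zero_iff]
      exact (pi_norm_le_iff_of_nonneg hρ₂0.le).2 fun i => (hz i).trans hρleρ₂
    calc ‖Rf z‖ ≤ ‖fderiv ℂ (polyOf h) z (F z)‖ + ‖A.mulVec (polyOf h z)‖ :=
        norm_sub_le _ _
      _ ≤ CN * δ⁻¹ * MF + CA * CN := by
          refine add_le_add ?_ ?_
          · exact (hfd z hz (F z)).trans
              (mul_le_mul_of_nonneg_left (hMF z hzB) (by positivity))
          · rw [← hLev]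
            exact (L.le_opNorm _).trans
              (mul_le_mul_of_nonneg_left (hpoly z fun i => (hz i).trans hρleρ₂) hCA0)
  have hMR0 : 0 ≤ MR := by
    rw [hMRdef]; positivity
  have hsubU : {z : Fin n → ℂ | ∀ i, ‖z i‖ ≤ ρ} ⊆ U :=
    fun z hz i => lt_of_le_of_lt (hz i) hρ1
  have hmc := multiCauchy α Rf hUopen hRanal hρ0 hsubU hRbd
  -- final arithmetic
  have hprod : ((α.prod fun _ k => Nat.factorial k : ℕ) : ℝ) = ∏ i, ((α i).factorial : ℝ) := by
    have h1 : (α.prod fun _ k => Nat.factorial k) = ∏ i, (α i).factorial :=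
      Finsupp.prod_fintype _ _ fun i => rfl
    rw [h1, Nat.cast_prod]
  have hprod0 : 0 ≤ ∏ i, ((α i).factorial : ℝ) :=
    Finset.prod_nonneg fun i _ => by positivity
  have hrpow : r ^ (-(mdeg α : ℝ)) = r⁻¹ ^ (mdeg α) := by
    rw [Real.rpow_neg hr0.le, Real.rpow_natCast, inv_pow]
  have hpowle : ρ⁻¹ ^ (mdeg α) ≤ r⁻¹ ^ (mdeg α) :=
    pow_le_pow_left₀ (by positivity) (inv_anti₀ hr0 hrρ) _
  have hB2 : B₂ ^ (-(s * (N : ℝ))) = a ^ (-(s * (N : ℝ))) * (2 : ℝ) ^ (s * (N : ℝ)) := by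
    rw [hB₂def, Real.div_rpow ha0.le (by norm_num : (0:ℝ) ≤ 2), div_eq_mul_inv,
      Real.rpow_neg (by norm_num : (0:ℝ) ≤ 2), inv_inv]
  have hMRle : MR ≤ A₂ * B₂ ^ (-(s * (N : ℝ))) * ((N.factorial : ℝ)) ^ s := by
    have hstep : MR = ((N : ℝ) + 1) ^ n * Q * (MF / δ + CA) := by
      rw [hMRdef, hCNdef]; field_simp
    rw [hstep, hA₂def, hB2, hQdef]
    have h1 : ((N : ℝ) + 1) ^ n * (A₁ * a ^ (-(s * (N : ℝ))) * ((N.factorial : ℝ)) ^ s)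
        * (MF / δ + CA)
        ≤ (C₀ ^ n * (2 : ℝ) ^ (s * (N : ℝ))) * (A₁ * a ^ (-(s * (N : ℝ)))
          * ((N.factorial : ℝ)) ^ s) * (MF / δ + CA + 1) := by
      refine mul_le_mul (mul_le_mul_of_nonneg_right ?_ hQ0) (by linarith) (by positivity) ?_
      · have := hC₀b N
        calc ((N : ℝ) + 1) ^ n ≤ C₀ ^ n * (2 : ℝ) ^ (s * (N:ℕ) : ℝ) := this
          _ = C₀ ^ n * (2 : ℝ) ^ (s * (N : ℝ)) := by norm_num
      · positivity
    calc ((N : ℝ) + 1) ^ n * (A₁ * a ^ (-(s * (N : ℝ))) * ((N.factorial : ℝ)) ^ s)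
          * (MF / δ + CA) ≤ _ := h1
      _ = C₀ ^ n * ((MF / δ + CA + 1) * A₁) * (a ^ (-(s * (N : ℝ)))
          * (2 : ℝ) ^ (s * (N : ℝ))) * ((N.factorial : ℝ)) ^ s := by ring
  calc ‖mpartial α Rf 0‖ ≤ (∏ i, ((α i).factorial : ℝ)) * ρ⁻¹ ^ (mdeg α) * MR := hmc
    _ ≤ (∏ i, ((α i).factorial : ℝ)) * r⁻¹ ^ (mdeg α)
        * (A₂ * B₂ ^ (-(s * (N : ℝ))) * ((N.factorial : ℝ)) ^ s) := by
        refine mul_le_mul (mul_le_mul_of_nonneg_left hpowle hprod0) hMRle hMR0 ?_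
        positivity
    _ = ((α.prod fun _ k => Nat.factorial k : ℕ) : ℝ)
        * (A₂ * r ^ (-(mdeg α : ℝ)) * B₂ ^ (-(s * (N : ℝ))) * ((N.factorial : ℝ)) ^ s) := by
        rw [hprod, hrpow]; ring
end

section
/- Let ρ : ℝ → ℝ be differentiable with ρ(0) = ρ₀ > 0 satisfying ρ'(t) ≤ A·exp(−B·(r/ρ(t))^{1/s}) and ρ'(t) ≥ −A·exp(−B·(r/ρ(t))^{1/s}) for constants A, B, r, s > 0 and all t where ρ(t) > 0. Then ρ(t) ≤ 2ρ₀ for all |t| ≤ T := (ρ₀/A)·exp(B·(r/(2ρ₀))^{1/s}). -/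
open Real Set

lemma aux18 (A B r s ρ₀ : ℝ) (hA : 0 < A) (hB : 0 < B) (hr : 0 < r) (hs : 0 < s)
    (hρ₀ : 0 < ρ₀) (ρ d : ℝ → ℝ)
    (hderiv : ∀ t, HasDerivAt ρ (d t) t)
    (hinit : ρ 0 = ρ₀)
    (hup : ∀ t, 0 < ρ t → d t ≤ A * Real.exp (-(B * (r / ρ t) ^ (1 / s))))
    (hdown : ∀ t, 0 < ρ t → -(A * Real.exp (-(B * (r / ρ t) ^ (1 / s)))) ≤ d t) :
    ∀ t : ℝ, 0 ≤ t → t ≤ (ρ₀ / A) * Real.exp (B * (r / (2 * ρ₀)) ^ (1 / s)) →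
      ρ t ≤ 2 * ρ₀ := by
  set X : ℝ := (r / (2 * ρ₀)) ^ (1 / s) with hX
  set M : ℝ := A * Real.exp (-(B * X)) with hM
  set T : ℝ := (ρ₀ / A) * Real.exp (B * X) with hT
  have hM0 : 0 < M := by positivity
  have hMT : M * T = ρ₀ := by
    rw [hM, hT, Real.exp_neg]
    field_simp
  have hc : Continuous ρ := continuous_iff_continuousAt.mpr fun x => (hderiv x).continuousAt
  -- derivative bound where 0 < ρ u ≤ 2ρ₀
  have hbound : ∀ u : ℝ, 0 < ρ u → ρ u ≤ 2 * ρ₀ → ‖d u‖ ≤ M := by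
    intro u h1 h2
    have hdiv : r / (2 * ρ₀) ≤ r / ρ u := by
      apply div_le_div_of_nonneg_left hr.le h1 h2
    have hpow : X ≤ (r / ρ u) ^ (1 / s) := by
      rw [hX]
      exact Real.rpow_le_rpow (by positivity) hdiv (by positivity)
    have hexp : A * Real.exp (-(B * (r / ρ u) ^ (1 / s))) ≤ M := by
      rw [hM]
      have := Real.exp_le_exp.mpr (neg_le_neg (mul_le_mul_of_nonneg_left hpow hB.le))
      nlinarith [this]
    rw [Real.norm_eq_abs, abs_le]
    constructor
    · linarith [hdown u h1]
    · linarith [hup u h1]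
  intro t ht0 htT
  by_contra hcon
  push_neg at hcon
  -- first hitting time of 2ρ₀
  have hSne : ({u ∈ Icc 0 t | ρ u = 2 * ρ₀} : Set ℝ).Nonempty := by
    have : (2 * ρ₀) ∈ Icc (ρ 0) (ρ t) := ⟨by rw [hinit]; linarith, hcon.le⟩
    obtain ⟨w, hw, hwval⟩ := intermediate_value_Icc ht0 hc.continuousOn this
    exact ⟨w, hw, hwval⟩
  have hSclosed : IsClosed ({u ∈ Icc 0 t | ρ u = 2 * ρ₀} : Set ℝ) :=
    (isClosed_Icc.inter (isClosed_eq hc continuous_const))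
  set a : ℝ := sInf {u ∈ Icc 0 t | ρ u = 2 * ρ₀} with ha
  have haS : a ∈ {u ∈ Icc 0 t | ρ u = 2 * ρ₀} :=
    hSclosed.csInf_mem hSne ⟨0, fun x hx => hx.1.1⟩
  obtain ⟨⟨ha0, hat⟩, haval⟩ := haS
  have hbelow : ∀ u, 0 ≤ u → u < a → ρ u < 2 * ρ₀ := by
    intro u hu0 hua
    by_contra h
    push_neg at h
    have : (2 * ρ₀) ∈ Icc (ρ 0) (ρ u) := ⟨by rw [hinit]; linarith, h⟩
    obtain ⟨w, hw, hwval⟩ := intermediate_value_Icc hu0 hc.continuousOn this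
    have : a ≤ w := csInf_le ⟨0, fun x hx => hx.1.1⟩
      ⟨⟨hw.1, le_trans hw.2 (le_trans hua.le hat)⟩, hwval⟩
    linarith [hw.2]
  -- last time before a at level ρ₀
  have hS2ne : ({u ∈ Icc 0 a | ρ u = ρ₀} : Set ℝ).Nonempty :=
    ⟨0, ⟨le_refl 0, ha0⟩, hinit⟩
  have hS2closed : IsClosed ({u ∈ Icc 0 a | ρ u = ρ₀} : Set ℝ) :=
    (isClosed_Icc.inter (isClosed_eq hc continuous_const))
  set b : ℝ := sSup {u ∈ Icc 0 a | ρ u = ρ₀} with hb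
  have hbS : b ∈ {u ∈ Icc 0 a | ρ u = ρ₀} :=
    hS2closed.csSup_mem hS2ne ⟨a, fun x hx => hx.1.2⟩
  obtain ⟨⟨hb0, hba⟩, hbval⟩ := hbS
  have habove : ∀ u, b < u → u ≤ a → ρ₀ ≤ ρ u := by
    intro u hbu hua
    by_contra h
    push_neg at h
    have : ρ₀ ∈ Icc (ρ u) (ρ a) := ⟨h.le, by rw [haval]; linarith⟩
    obtain ⟨w, hw, hwval⟩ := intermediate_value_Icc hua hc.continuousOn this
    have : w ≤ b := le_csSup ⟨a, fun x hx => hx.1.2⟩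
      ⟨⟨le_trans (le_trans hb0 hbu.le) hw.1, hw.2⟩, hwval⟩
    linarith [hw.1]
  -- on Icc b a, ρ₀ ≤ ρ ≤ 2ρ₀
  have hrange : ∀ x ∈ Icc b a, ρ₀ ≤ ρ x ∧ ρ x ≤ 2 * ρ₀ := by
    intro x ⟨hx1, hx2⟩
    constructor
    · rcases eq_or_lt_of_le hx1 with h | h
      · rw [← h, hbval]
      · exact habove x h hx2
    · rcases eq_or_lt_of_le hx2 with h | h
      · rw [h, haval]
      · exact (hbelow x (le_trans hb0 hx1) h).le
  have hmvt : ∀ x ∈ Icc b a, ‖ρ x - ρ b‖ ≤ M * (x - b) := by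
    exact norm_image_sub_le_of_norm_deriv_le_segment'
      (fun x hx => (hderiv x).hasDerivWithinAt)
      (fun x hx => by
        obtain ⟨h1, h2⟩ := hrange x ⟨hx.1, hx.2.le⟩
        exact hbound x (lt_of_lt_of_le hρ₀ h1) h2)
  have hfin : ‖ρ a - ρ b‖ ≤ M * (a - b) := hmvt a ⟨hba, le_refl a⟩
  rw [haval, hbval, Real.norm_eq_abs] at hfin
  have h1 : (2 * ρ₀ - ρ₀) ≤ |2 * ρ₀ - ρ₀| := le_abs_self _
  have hat' : a < t := by
    rcases eq_or_lt_of_le hat with h | h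
    · exfalso; rw [h] at haval; linarith
    · exact h
  nlinarith [hfin, hat', hb0, hM0, hMT, htT, mul_le_mul_of_nonneg_left htT hM0.le]


/-- Two-sided flow control: if `ρ(0) = ρ₀ > 0` and
`|ρ'(t)| ≤ A exp(−B (r/ρ(t))^{1/s})` wherever `ρ(t) > 0`, then
`ρ(t) ≤ 2ρ₀` for all `|t| ≤ T = (ρ₀/A) exp(B (r/(2ρ₀))^{1/s})`. -/
theorem stmt18 (A B r s ρ₀ : ℝ) (hA : 0 < A) (hB : 0 < B) (hr : 0 < r) (hs : 0 < s)
    (hρ₀ : 0 < ρ₀) (ρ d : ℝ → ℝ)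
    (hderiv : ∀ t, HasDerivAt ρ (d t) t)
    (hinit : ρ 0 = ρ₀)
    (hup : ∀ t, 0 < ρ t → d t ≤ A * Real.exp (-(B * (r / ρ t) ^ (1 / s))))
    (hdown : ∀ t, 0 < ρ t → -(A * Real.exp (-(B * (r / ρ t) ^ (1 / s)))) ≤ d t) :
    ∀ t : ℝ, |t| ≤ (ρ₀ / A) * Real.exp (B * (r / (2 * ρ₀)) ^ (1 / s)) →
      ρ t ≤ 2 * ρ₀ := by
  intro t ht
  rcases le_or_gt 0 t with h0 | h0
  · rw [abs_of_nonneg h0] at ht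
    exact aux18 A B r s ρ₀ hA hB hr hs hρ₀ ρ d hderiv hinit hup hdown t h0 ht
  · rw [abs_of_neg h0] at ht
    have key := aux18 A B r s ρ₀ hA hB hr hs hρ₀ (fun u => ρ (-u)) (fun u => -d (-u))
      (fun u => by
        have := ((hderiv (-u)).comp u (hasDerivAt_neg u))
        simpa [mul_neg_one, Function.comp_def] using this)
      (by simpa using hinit)
      (fun u hu => by simpa using neg_le_neg (hdown (-u) hu))
      (fun u hu => by simpa using neg_le_neg (hup (-u) hu))
      (-t) (by linarith) ht
    simpa using key
end
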